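/- arXiv:2109.10045 — 2 statements merged into one kernel-verified Lean document; each statement's English description precedes it below -/
import Mathlib

section
/- Let A₁₁ ∈ ℍ^{m×n₁}, B₁₁ ∈ ℍ^{p₁×q}, A₂₂ ∈ ℍ^{m×n₂}, B₂₂ ∈ ℍ^{p₂×q}, A₃₃ ∈ ℍ^{m×n₃}, B₃₃ ∈ ℍ^{p₃×q}, T₁ ∈ ℍ^{m×q} be quaternion matrices. Define M₁ = R_{A₁₁}A₂₂, N₁ = B₂₂L_{B₁₁}, C = R_{M₁}R_{A₁₁}, D = L_{B₁₁}L_{N₁}, C₁ = CA₃₃, C₂ = R_{A₁₁}A₃₃, C₃ = R_{A₂₂}A₃₃, C₄ = A₃₃, D₁ = B₃₃, D₂ = B₃₃L_{B₂₂}, D₃ = B₃₃L_{B₁₁}, D₄ = B₃₃D, E₁ = CT₁, E₂ = R_{A₁₁}T₁L_{B₂₂}, E₃ = R_{A₂₂}T₁L_{B₁₁}, E₄ = T₁D, C₁₁ = (L_{C₂}, L_{C₄}) (block row), D₁₁ = (R_{D₁}; R_{D₃}) (block column), C₂₂ = L_{C₁}, D₂₂ = R_{D₂}, C₃₃ = L_{C₃},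 D₃₃ = R_{D₄}, E₁₁ = R_{C₁₁}C₂₂, E₂₂ = R_{C₁₁}C₃₃, E₃₃ = D₂₂L_{D₁₁}, F₁ = C₁⁺E₁D₁⁺ + L_{C₁}C₂⁺E₂D₂⁺, F₂ = C₃⁺E₃D₃⁺ + L_{C₃}C₄⁺E₄D₄⁺, F = F₂ − F₁, E = R_{C₁₁}FL_{D₁₁}, with Moore–Penrose inverses of all matrices appearing with ⁺ or in L_·, R_· given as hypotheses. Then the equation A₁₁Y₁B₁₁ + A₂₂Y₂B₂₂ + A₃₃Y₃B₃₃ = T₁ has a solution (Y₁, Y₂, Y₃) if and only if R_{Cᵢ}Eᵢ = 0 and EᵢL_{Dᵢ} = 0 for all i = 1,2,3,4, and R_{E₂₂}EL_{E₃₃} = 0. -/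
/-!
Solving first for `Y₁, Y₂`, the two-term criterion turns the equation into four equations
`Cᵢ Y₃ Dᵢ = Eᵢ` (the four projections of `T₁ - A₃₃ Y₃ B₃₃` that must vanish). The pairs `(1,2)`,
`(3,4)`, `(1,3)` and `(2,4)` of these equations are nested. The general solution of the pair
`(1,2)` is `F₁ + L_{C₂} U + V R_{D₁} + L_{C₁} W R_{D₂}`, and similarly for `(3,4)` around `F₂`,
so the system is solvable iff `F = F₂ - F₁` is a sum `C₁₁ X₁ + X₂ D₁₁ + L_{C₁} W₁ R_{D₂} +
L_{C₃} W₂ R_{D₄}`. Eliminating `X₁, X₂` leaves `E₁₁ W₁ E₃₃ + E₂₂ W₂ (R_{D₄} L_{D₁₁}) = E`. The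
nested pairs `(1,3)` and `(2,4)` make `E` a left multiple of `E₁₁` and a right multiple of
`R_{D₄} L_{D₁₁}`, and for such a right-hand side this equation is solvable iff
`R_{E₂₂} E L_{E₃₃} = 0`.
-/

open Matrix

abbrev Hq : Type := Quaternion ℝ

def IsMPInv {m n : Type*} [Fintype m] [Fintype n] (A : Matrix m n Hq) (Ap : Matrix n m Hq) :
    Prop :=
  A * Ap * A = A ∧ Ap * A * Ap = Ap ∧ (A * Ap)ᴴ = A * Ap ∧ (Ap * A)ᴴ = Ap * A

namespace Matrix

variable {α : Type*} [Ring α] {l m n : Type*} [Fintype m] [Fintype n]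

theorem mul_mul_eq_of_one_sub_mul_mul_eq_zero [DecidableEq m] {A : Matrix m n α}
    {B : Matrix n m α} {X : Matrix m l α} (h : (1 - A * B) * X = 0) : A * (B * X) = X := by
  rw [Matrix.sub_mul, Matrix.one_mul, sub_eq_zero] at h
  rw [← Matrix.mul_assoc, ← h]

theorem mul_mul_eq_of_mul_one_sub_mul_eq_zero [DecidableEq m] {X : Matrix l m α}
    {A : Matrix m n α} {B : Matrix n m α} (h : X * (1 - A * B) = 0) : X * A * B = X := by
  rw [Matrix.mul_sub, Matrix.mul_one, sub_eq_zero, ← Matrix.mul_assoc] at h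
  exact h.symm

theorem mul_one_sub_mul_of_mul_eq_zero [DecidableEq m] {X : Matrix l m α} {A : Matrix m n α}
    {B : Matrix n m α} (h : X * A = 0) : X * (1 - A * B) = X := by
  rw [Matrix.mul_sub, Matrix.mul_one, ← Matrix.mul_assoc, h, Matrix.zero_mul, sub_zero]

theorem one_sub_mul_mul_of_mul_eq_zero [DecidableEq n] {A : Matrix m n α} {B : Matrix n m α}
    {X : Matrix n l α} (h : A * X = 0) : (1 - B * A) * X = X := by
  rw [Matrix.sub_mul, Matrix.one_mul, Matrix.mul_assoc, h, Matrix.mul_zero, sub_zero]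

end Matrix

/-! `rproj` and `lproj` in names refer to the projectors `R_A = 1 - A A⁺` and `L_A = 1 - A⁺ A`. -/

namespace IsMPInv

variable {k m n p q : Type*} [Fintype m] [Fintype n] [Fintype p] [Fintype q]
  {A : Matrix m n Hq} {Ap : Matrix n m Hq} {B : Matrix p q Hq} {Bp : Matrix q p Hq}

theorem rproj_mul_self [DecidableEq m] (h : IsMPInv A Ap) : (1 - A * Ap) * A = 0 := by
  rw [Matrix.sub_mul, Matrix.one_mul, h.1, sub_self]

theorem self_mul_lproj [DecidableEq n] (h : IsMPInv A Ap) : A * (1 - Ap * A) = 0 := by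
  rw [Matrix.mul_sub, Matrix.mul_one, ← Matrix.mul_assoc, h.1, sub_self]

theorem isHermitian_rproj [DecidableEq m] (h : IsMPInv A Ap) : (1 - A * Ap).IsHermitian := by
  rw [IsHermitian, conjTranspose_sub, conjTranspose_one, h.2.2.1]

theorem rproj_mul_eq_zero [DecidableEq m] (h : IsMPInv A Ap) {G : Matrix m k Hq}
    {X : Matrix n k Hq} (hG : G = A * X) : (1 - A * Ap) * G = 0 := by
  rw [hG, ← Matrix.mul_assoc, h.rproj_mul_self, Matrix.zero_mul]

theorem mul_lproj_eq_zero [DecidableEq n] (h : IsMPInv A Ap) {G : Matrix k n Hq}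
    {X : Matrix k m Hq} (hG : G = X * A) : G * (1 - Ap * A) = 0 := by
  rw [hG, Matrix.mul_assoc, h.self_mul_lproj, Matrix.mul_zero]

theorem pinv_mul_of_mul_eq (h : IsMPInv A Ap) {L : Matrix m m Hq} (hL : L.IsHermitian)
    (hLA : L * A = A) : Ap * L = Ap := by
  have hPL : A * Ap * L = A * Ap := by
    simpa only [conjTranspose_mul, hL.eq, h.2.2.1, Matrix.mul_assoc] using
      congrArg conjTranspose (congrArg (· * Ap) hLA)
  calc Ap * L = Ap * A * Ap * L := by rw [h.2.1]
    _ = Ap * (A * Ap * L) := by simp only [Matrix.mul_assoc]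
    _ = Ap := by rw [hPL, ← Matrix.mul_assoc, h.2.1]

theorem exists_mul_mul_eq_iff [DecidableEq m] [DecidableEq q] (hA : IsMPInv A Ap)
    (hB : IsMPInv B Bp) {G : Matrix m q Hq} :
    (∃ X : Matrix n p Hq, A * X * B = G) ↔ (1 - A * Ap) * G = 0 ∧ G * (1 - Bp * B) = 0 := by
  constructor
  · rintro ⟨X, rfl⟩
    exact ⟨hA.rproj_mul_eq_zero (Matrix.mul_assoc _ _ _), hB.mul_lproj_eq_zero rfl⟩
  · rintro ⟨hGA, hGB⟩
    refine ⟨Ap * G * Bp, ?_⟩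
    rw [Matrix.mul_assoc A, Matrix.mul_assoc, ← Matrix.mul_assoc A,
      mul_mul_eq_of_one_sub_mul_mul_eq_zero hGA, ← Matrix.mul_assoc,
      mul_mul_eq_of_mul_one_sub_mul_eq_zero hGB]

theorem exists_mul_add_mul_eq_iff [DecidableEq m] [DecidableEq q] (hA : IsMPInv A Ap)
    (hB : IsMPInv B Bp) {G : Matrix m q Hq} :
    (∃ (X : Matrix n q Hq) (Y : Matrix m p Hq), A * X + Y * B = G) ↔
      (1 - A * Ap) * G * (1 - Bp * B) = 0 := by
  constructor
  · rintro ⟨X, Y, rfl⟩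
    rw [Matrix.mul_add, hA.rproj_mul_eq_zero rfl, zero_add]
    exact hB.mul_lproj_eq_zero (Matrix.mul_assoc _ _ _).symm
  · intro hG
    refine ⟨Ap * G, (1 - A * Ap) * G * Bp, ?_⟩
    rw [mul_mul_eq_of_mul_one_sub_mul_eq_zero hG, ← Matrix.mul_assoc, Matrix.sub_mul,
      Matrix.one_mul, add_sub_cancel]

end IsMPInv

section TwoTerm

variable {m n₁ p₁ n₂ p₂ q : Type*} [Fintype m] [Fintype n₁] [Fintype p₁] [Fintype n₂]
  [Fintype p₂] [Fintype q] [DecidableEq m] [DecidableEq q]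
  {A₁ : Matrix m n₁ Hq} {B₁ : Matrix p₁ q Hq} {A₂ : Matrix m n₂ Hq} {B₂ : Matrix p₂ q Hq}
  {A₁p : Matrix n₁ m Hq} {B₁p : Matrix q p₁ Hq} {A₂p : Matrix n₂ m Hq} {B₂p : Matrix q p₂ Hq}

theorem exists_two_term_of_consistent [DecidableEq n₂] (hA₁ : IsMPInv A₁ A₁p)
    (hB₁ : IsMPInv B₁ B₁p) {M : Matrix m n₂ Hq}
    (hM : M = (1 - A₁ * A₁p) * A₂) {Mp : Matrix n₂ m Hq} (hMp : IsMPInv M Mp)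
    {N : Matrix p₂ q Hq} (hN : N = B₂ * (1 - B₁p * B₁)) {Np : Matrix q p₂ Hq} {T : Matrix m q Hq}
    (h₁ : (1 - M * Mp) * (1 - A₁ * A₁p) * T = 0) (h₂ : (1 - A₁ * A₁p) * T * (1 - B₂p * B₂) = 0)
    (h₃ : (1 - A₂ * A₂p) * T * (1 - B₁p * B₁) = 0) (h₄ : T * (1 - B₁p * B₁) * (1 - Np * N) = 0) :
    ∃ (X₁ : Matrix n₁ p₁ Hq) (X₂ : Matrix n₂ p₂ Hq), A₁ * X₁ * B₁ + A₂ * X₂ * B₂ = T := by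
  set R₁ := 1 - A₁ * A₁p
  set L₁ := 1 - B₁p * B₁
  have hMpR₁ : Mp * R₁ = Mp := by
    refine hMp.pinv_mul_of_mul_eq hA₁.isHermitian_rproj ?_
    rw [hM, ← Matrix.mul_assoc, mul_one_sub_mul_of_mul_eq_zero hA₁.rproj_mul_self]
  have h₁' : M * (Mp * (R₁ * T)) = R₁ * T :=
    mul_mul_eq_of_one_sub_mul_mul_eq_zero (by rw [← Matrix.mul_assoc, h₁])
  have h₂' : R₁ * (T * (B₂p * B₂)) = R₁ * T := by
    rw [← Matrix.mul_assoc, ← Matrix.mul_assoc, mul_mul_eq_of_mul_one_sub_mul_eq_zero h₂]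
  have h₃' : A₂ * (A₂p * (T * L₁)) = T * L₁ :=
    mul_mul_eq_of_one_sub_mul_mul_eq_zero (by rw [← Matrix.mul_assoc, h₃])
  have h₄' : T * (L₁ * (Np * N)) = T * L₁ := by
    rw [← Matrix.mul_assoc, ← Matrix.mul_assoc, mul_mul_eq_of_mul_one_sub_mul_eq_zero h₄]
  set X₂ := Mp * T * B₂p + (1 - Mp * M) * A₂p * T * L₁ * Np with hX₂
  have hMX₂ : M * X₂ * B₂ = R₁ * T := by
    calc M * X₂ * B₂ = M * (Mp * R₁) * T * B₂p * B₂ := by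
          rw [hMpR₁, hX₂, Matrix.mul_add, Matrix.add_mul]
          simp only [← Matrix.mul_assoc, hMp.self_mul_lproj, Matrix.zero_mul, add_zero]
      _ = R₁ * T := by simp only [Matrix.mul_assoc, h₂', h₁']
  have hX₂N : X₂ * N = A₂p * (T * L₁) := by
    have hMA₂p : M * (A₂p * (T * L₁)) = R₁ * T * L₁ := by
      rw [hM, Matrix.mul_assoc, h₃', Matrix.mul_assoc]
    have hMpN : Mp * T * B₂p * N = Mp * (R₁ * T) * L₁ := by
      calc Mp * T * B₂p * N = Mp * R₁ * T * B₂p * (B₂ * L₁) := by rw [hMpR₁, hN]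
        _ = Mp * (R₁ * (T * (B₂p * B₂))) * L₁ := by simp only [Matrix.mul_assoc]
        _ = Mp * (R₁ * T) * L₁ := by rw [h₂']
    calc X₂ * N = Mp * T * B₂p * N + (1 - Mp * M) * (A₂p * (T * (L₁ * (Np * N)))) := by
          rw [hX₂]
          simp only [Matrix.add_mul, Matrix.mul_assoc]
      _ = Mp * (R₁ * T) * L₁ + (A₂p * (T * L₁) - Mp * (M * (A₂p * (T * L₁)))) := by
          rw [hMpN, h₄', Matrix.sub_mul 1 (Mp * M), Matrix.one_mul, Matrix.mul_assoc Mp M]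
      _ = A₂p * (T * L₁) := by
          rw [hMA₂p]
          simp only [Matrix.mul_assoc]
          abel
  have hRA₂ : R₁ * (A₂ * X₂ * B₂) = R₁ * T := by
    rw [← hMX₂, hM]
    simp only [Matrix.mul_assoc]
  obtain ⟨X₁, hX₁⟩ := (hA₁.exists_mul_mul_eq_iff hB₁ (G := T - A₂ * X₂ * B₂)).2
    ⟨by rw [Matrix.mul_sub, hRA₂, sub_self],
      by rw [Matrix.sub_mul, Matrix.mul_assoc _ B₂, ← hN, Matrix.mul_assoc, hX₂N, h₃', sub_self]⟩
  exact ⟨X₁, X₂, by rw [hX₁, sub_add_cancel]⟩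

theorem exists_two_term_iff [DecidableEq n₂] (hA₁ : IsMPInv A₁ A₁p)
    (hB₁ : IsMPInv B₁ B₁p) (hA₂ : IsMPInv A₂ A₂p) (hB₂ : IsMPInv B₂ B₂p)
    {M : Matrix m n₂ Hq} (hM : M = (1 - A₁ * A₁p) * A₂) {Mp : Matrix n₂ m Hq}
    (hMp : IsMPInv M Mp) {N : Matrix p₂ q Hq} (hN : N = B₂ * (1 - B₁p * B₁))
    {Np : Matrix q p₂ Hq} (hNp : IsMPInv N Np) (T : Matrix m q Hq) :
    (∃ (X₁ : Matrix n₁ p₁ Hq) (X₂ : Matrix n₂ p₂ Hq), A₁ * X₁ * B₁ + A₂ * X₂ * B₂ = T) ↔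
      (1 - M * Mp) * (1 - A₁ * A₁p) * T = 0 ∧ (1 - A₁ * A₁p) * T * (1 - B₂p * B₂) = 0 ∧
      (1 - A₂ * A₂p) * T * (1 - B₁p * B₁) = 0 ∧ T * (1 - B₁p * B₁) * (1 - Np * N) = 0 := by
  refine ⟨?_, fun ⟨h₁, h₂, h₃, h₄⟩ =>
    exists_two_term_of_consistent hA₁ hB₁ hM hMp hN h₁ h₂ h₃ h₄⟩
  rintro ⟨X₁, X₂, rfl⟩
  have hR : (1 - A₁ * A₁p) * (A₁ * X₁ * B₁ + A₂ * X₂ * B₂) = M * (X₂ * B₂) := by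
    rw [Matrix.mul_add, hA₁.rproj_mul_eq_zero (Matrix.mul_assoc _ _ _), zero_add, hM]
    simp only [Matrix.mul_assoc]
  have hL : (A₁ * X₁ * B₁ + A₂ * X₂ * B₂) * (1 - B₁p * B₁) = A₂ * X₂ * N := by
    rw [Matrix.add_mul, hB₁.mul_lproj_eq_zero rfl, zero_add, hN]
    simp only [Matrix.mul_assoc]
  refine ⟨?_, ?_, ?_, ?_⟩
  · rw [Matrix.mul_assoc, hR]
    exact hMp.rproj_mul_eq_zero rfl
  · rw [hR]
    exact hB₂.mul_lproj_eq_zero (Matrix.mul_assoc _ _ _).symm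
  · rw [Matrix.mul_assoc, hL]
    exact hA₂.rproj_mul_eq_zero (Matrix.mul_assoc _ _ _)
  · rw [hL]
    exact hNp.mul_lproj_eq_zero rfl

end TwoTerm

section BlockTerms

variable {m n n₁ n₂ p₁ p₂ q : Type*} [Fintype m] [Fintype n] [Fintype n₁] [Fintype n₂]
  [Fintype p₁] [Fintype p₂] [Fintype q] [DecidableEq m] [DecidableEq q]

theorem exists_two_term_iff_of_eq_mul {A₁ : Matrix m n₁ Hq} {B₁ : Matrix p₁ q Hq}
    {A₂ : Matrix m n₂ Hq} {B₂ : Matrix p₂ q Hq} {A₂p : Matrix n₂ m Hq} {B₁p : Matrix q p₁ Hq}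
    (hA₂ : IsMPInv A₂ A₂p) (hB₁ : IsMPInv B₁ B₁p) {E : Matrix m q Hq} {K : Matrix n₁ q Hq}
    {K' : Matrix m p₂ Hq} {Q : Matrix p₁ p₂ Hq} (hK : E = A₁ * K) (hK' : E = K' * B₂)
    (hQ : B₁ = Q * B₂) :
    (∃ (X₁ : Matrix n₁ p₁ Hq) (X₂ : Matrix n₂ p₂ Hq), A₁ * X₁ * B₁ + A₂ * X₂ * B₂ = E) ↔
      (1 - A₂ * A₂p) * E * (1 - B₁p * B₁) = 0 := by
  constructor
  · rintro ⟨X₁, X₂, rfl⟩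
    rw [Matrix.mul_add, Matrix.add_mul, hA₂.rproj_mul_eq_zero (Matrix.mul_assoc _ _ _),
      Matrix.zero_mul, add_zero]
    exact hB₁.mul_lproj_eq_zero (X := (1 - A₂ * A₂p) * (A₁ * X₁))
      (by simp only [Matrix.mul_assoc])
  · intro h
    -- `X₁ = K B₁⁺` leaves the residual `E L_{B₁} = K' (1 - B₂ B₁⁺ Q) B₂`, absorbed by `X₂`.
    refine ⟨K * B₁p, A₂p * (K' - K' * B₂ * B₁p * Q), ?_⟩
    have h₁ : A₁ * (K * B₁p) * B₁ = E * B₁p * B₁ := by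
      rw [hK]
      simp only [Matrix.mul_assoc]
    have h₂ : A₂ * (A₂p * (K' - K' * B₂ * B₁p * Q)) * B₂
        = A₂ * (A₂p * (E * (1 - B₁p * B₁))) := by
      rw [hK', hQ]
      simp only [Matrix.mul_sub, Matrix.sub_mul, Matrix.mul_one, Matrix.mul_assoc]
    rw [h₁, h₂, mul_mul_eq_of_one_sub_mul_mul_eq_zero (by rw [← Matrix.mul_assoc, h]),
      Matrix.mul_sub, Matrix.mul_one, Matrix.mul_assoc, add_sub_cancel]

variable [DecidableEq n] {L₁ : Matrix n n₁ Hq} {L₂ : Matrix n n₂ Hq} {R₁ : Matrix p₁ q Hq}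
  {R₂ : Matrix p₂ q Hq} {C : Matrix n (n₁ ⊕ n₂) Hq} {Cp : Matrix (n₁ ⊕ n₂) n Hq}
  {D : Matrix (p₁ ⊕ p₂) q Hq} {Dp : Matrix q (p₁ ⊕ p₂) Hq}

theorem exists_four_term_iff_of_block (hC : C = fromCols L₁ L₂) (hD : D = fromRows R₁ R₂)
    (hCp : IsMPInv C Cp) (hDp : IsMPInv D Dp) {G : Matrix n q Hq} :
    (∃ (U₁ : Matrix n₁ q Hq) (U₂ : Matrix n₂ q Hq) (V₁ : Matrix n p₁ Hq) (V₂ : Matrix n p₂ Hq),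
        L₁ * U₁ + L₂ * U₂ + V₁ * R₁ + V₂ * R₂ = G) ↔
      (1 - C * Cp) * G * (1 - Dp * D) = 0 := by
  rw [← hCp.exists_mul_add_mul_eq_iff hDp]
  constructor
  · rintro ⟨U₁, U₂, V₁, V₂, rfl⟩
    refine ⟨fromRows U₁ U₂, fromCols V₁ V₂, ?_⟩
    rw [hC, hD, fromCols_mul_fromRows, fromCols_mul_fromRows, ← add_assoc]
  · rintro ⟨X, Y, rfl⟩
    refine ⟨X.toRows₁, X.toRows₂, Y.toCols₁, Y.toCols₂, ?_⟩
    rw [hC, hD, add_assoc, ← fromCols_mul_fromRows, ← fromCols_mul_fromRows, fromRows_toRows,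
      fromCols_toCols]

theorem exists_six_term_iff_of_block {m₁ m₂ r₁ r₂ : Type*} [Fintype m₁] [Fintype m₂] [Fintype r₁]
    [Fintype r₂] (hC : C = fromCols L₁ L₂) (hD : D = fromRows R₁ R₂) (hCp : IsMPInv C Cp)
    (hDp : IsMPInv D Dp) {P₁ : Matrix n m₁ Hq} {Q₁ : Matrix r₁ q Hq} {P₂ : Matrix n m₂ Hq}
    {Q₂ : Matrix r₂ q Hq} {G : Matrix n q Hq} :
    (∃ (U₁ : Matrix n₁ q Hq) (U₂ : Matrix n₂ q Hq) (V₁ : Matrix n p₁ Hq) (V₂ : Matrix n p₂ Hq)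
        (W₁ : Matrix m₁ r₁ Hq) (W₂ : Matrix m₂ r₂ Hq),
        L₁ * U₁ + L₂ * U₂ + V₁ * R₁ + V₂ * R₂ + P₁ * W₁ * Q₁ + P₂ * W₂ * Q₂ = G) ↔
      ∃ (W₁ : Matrix m₁ r₁ Hq) (W₂ : Matrix m₂ r₂ Hq),
        (1 - C * Cp) * P₁ * W₁ * (Q₁ * (1 - Dp * D)) + (1 - C * Cp) * P₂ * W₂ * (Q₂ * (1 - Dp * D))
          = (1 - C * Cp) * G * (1 - Dp * D) := by
  have hsplit : ∀ (W₁ : Matrix m₁ r₁ Hq) (W₂ : Matrix m₂ r₂ Hq),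
      ((1 - C * Cp) * (G - P₁ * W₁ * Q₁ - P₂ * W₂ * Q₂) * (1 - Dp * D) = 0 ↔
      (1 - C * Cp) * P₁ * W₁ * (Q₁ * (1 - Dp * D)) + (1 - C * Cp) * P₂ * W₂ * (Q₂ * (1 - Dp * D))
        = (1 - C * Cp) * G * (1 - Dp * D)) := by
    intro W₁ W₂
    generalize 1 - C * Cp = R
    generalize 1 - Dp * D = L
    rw [Matrix.mul_sub, Matrix.mul_sub, Matrix.sub_mul, Matrix.sub_mul, sub_sub, sub_eq_zero,
      eq_comm]
    simp only [Matrix.mul_assoc]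
  simp_rw [← hsplit, ← exists_four_term_iff_of_block hC hD hCp hDp]
  constructor
  · rintro ⟨U₁, U₂, V₁, V₂, W₁, W₂, rfl⟩
    exact ⟨W₁, W₂, U₁, U₂, V₁, V₂, by abel⟩
  · rintro ⟨W₁, W₂, U₁, U₂, V₁, V₂, h⟩
    exact ⟨U₁, U₂, V₁, V₂, W₁, W₂, by rw [h]; abel⟩

end BlockTerms

section NestedPairs

variable {k m₁ m₂ n p q₁ q₂ : Type*}
  {C₁ : Matrix m₁ n Hq} {D₁ : Matrix p q₁ Hq} {E₁ : Matrix m₁ q₁ Hq}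
  {C₂ : Matrix m₂ n Hq} {D₂ : Matrix p q₂ Hq} {E₂ : Matrix m₂ q₂ Hq}
  {C₁p : Matrix n m₁ Hq} {D₁p : Matrix q₁ p Hq} {C₂p : Matrix n m₂ Hq} {D₂p : Matrix q₂ p Hq}

/-- Multiplying `C₁ X D₁ = E₁` by `Q` on the right and `C₂ X D₂ = E₂` by `P` on the left yields
the same equation `C₁ X D₂ = E₁ Q = P E₂`. -/
def NestedPair [Fintype m₂] [Fintype q₁] (C₁ : Matrix m₁ n Hq) (D₁ : Matrix p q₁ Hq)
    (E₁ : Matrix m₁ q₁ Hq) (C₂ : Matrix m₂ n Hq) (D₂ : Matrix p q₂ Hq) (E₂ : Matrix m₂ q₂ Hq) :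
    Prop :=
  ∃ (P : Matrix m₁ m₂ Hq) (Q : Matrix q₁ q₂ Hq), C₁ = P * C₂ ∧ D₂ = D₁ * Q ∧ P * E₂ = E₁ * Q

theorem mul_mul_eq_zero_and_mul_mul_eq_zero_iff [Fintype m₁] [Fintype m₂] [Fintype n] [Fintype p]
    [Fintype q₁] [Fintype q₂] [DecidableEq n] [DecidableEq p]
    (hC₁ : IsMPInv C₁ C₁p) (hD₁ : IsMPInv D₁ D₁p) (hC₂ : IsMPInv C₂ C₂p) (hD₂ : IsMPInv D₂ D₂p)
    (hCC : C₁ * (1 - C₂p * C₂) = 0) (hDD : (1 - D₁ * D₁p) * D₂ = 0) {H : Matrix n p Hq} :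
    (C₁ * H * D₁ = 0 ∧ C₂ * H * D₂ = 0) ↔
      ∃ U V W : Matrix n p Hq,
        (1 - C₂p * C₂) * U + V * (1 - D₁ * D₁p) + (1 - C₁p * C₁) * W * (1 - D₂ * D₂p) = H := by
  constructor
  · rintro ⟨h₁, h₂⟩
    set Z := C₂p * C₂ * H * D₁ * D₁p with hZ
    have hC₁Z : C₁ * Z = 0 := by
      simp only [hZ, ← Matrix.mul_assoc]
      rw [mul_mul_eq_of_mul_one_sub_mul_eq_zero hCC, h₁, Matrix.zero_mul]
    have hZD₂ : Z * D₂ = 0 := by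
      simp only [hZ, Matrix.mul_assoc]
      rw [mul_mul_eq_of_one_sub_mul_mul_eq_zero hDD, ← Matrix.mul_assoc C₂, h₂, Matrix.mul_zero]
    refine ⟨H, C₂p * C₂ * H, Z, ?_⟩
    rw [one_sub_mul_mul_of_mul_eq_zero hC₁Z, mul_one_sub_mul_of_mul_eq_zero hZD₂, hZ]
    simp only [Matrix.sub_mul, Matrix.mul_sub, Matrix.one_mul, Matrix.mul_one, Matrix.mul_assoc]
    abel
  · rintro ⟨U, V, W, rfl⟩
    have hC₁L₂ : ∀ X : Matrix n p Hq, C₁ * ((1 - C₂p * C₂) * X) = 0 := fun X => by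
      rw [← Matrix.mul_assoc, hCC, Matrix.zero_mul]
    have hC₁L₁ : ∀ X : Matrix n p Hq, C₁ * ((1 - C₁p * C₁) * X) = 0 := fun X => by
      rw [← Matrix.mul_assoc, hC₁.self_mul_lproj, Matrix.zero_mul]
    have hC₂L₂ : ∀ X : Matrix n p Hq, C₂ * ((1 - C₂p * C₂) * X) = 0 := fun X => by
      rw [← Matrix.mul_assoc, hC₂.self_mul_lproj, Matrix.zero_mul]
    constructor <;>
      simp only [Matrix.mul_add, Matrix.add_mul, Matrix.mul_assoc, hC₁L₂, hC₁L₁, hC₂L₂, hDD,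
        hD₁.rproj_mul_self, hD₂.rproj_mul_self, Matrix.mul_zero, Matrix.zero_mul, add_zero]

theorem mul_particular_eq [Fintype m₁] [Fintype m₂] [Fintype n] [Fintype q₁] [Fintype q₂]
    [DecidableEq m₁] [DecidableEq n] (hC₁ : IsMPInv C₁ C₁p)
    (hE₁ : (1 - C₁ * C₁p) * E₁ = 0) {F : Matrix n p Hq}
    (hF : F = C₁p * E₁ * D₁p + (1 - C₁p * C₁) * C₂p * E₂ * D₂p) : C₁ * F = E₁ * D₁p := by
  rw [hF, Matrix.mul_add]
  simp only [← Matrix.mul_assoc, hC₁.self_mul_lproj, Matrix.zero_mul, add_zero]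
  rw [Matrix.mul_assoc C₁, mul_mul_eq_of_one_sub_mul_mul_eq_zero hE₁]

namespace NestedPair

theorem mul_lproj_eq_zero [Fintype m₂] [Fintype n] [Fintype q₁] [DecidableEq n]
    (h : NestedPair C₁ D₁ E₁ C₂ D₂ E₂) (hC₂ : IsMPInv C₂ C₂p) : C₁ * (1 - C₂p * C₂) = 0 := by
  obtain ⟨P, -, hC, -, -⟩ := h
  exact hC₂.mul_lproj_eq_zero hC

theorem rproj_mul_eq_zero [Fintype m₂] [Fintype p] [Fintype q₁] [DecidableEq p]
    (h : NestedPair C₁ D₁ E₁ C₂ D₂ E₂) (hD₁ : IsMPInv D₁ D₁p) : (1 - D₁ * D₁p) * D₂ = 0 := by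
  obtain ⟨-, Q, -, hD, -⟩ := h
  exact hD₁.rproj_mul_eq_zero hD

theorem mul_mul_eq_of_rproj_mul_eq_zero [Fintype m₂] [Fintype n] [Fintype p] [Fintype q₁]
    [Fintype q₂] [DecidableEq p] [DecidableEq q₁]
    (h : NestedPair C₁ D₁ E₁ C₂ D₂ E₂) (hE₁ : E₁ * (1 - D₁p * D₁) = 0) {X₁ X₂ : Matrix n p Hq}
    (hX₁ : C₁ * X₁ = E₁ * D₁p) (hX₂ : C₂ * X₂ = E₂ * D₂p) {Z : Matrix p k Hq}
    (hZ : (1 - D₂ * D₂p) * Z = 0) : C₁ * X₁ * Z = C₁ * X₂ * Z := by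
  obtain ⟨P, Q, hC, hD, hE⟩ := h
  calc C₁ * X₁ * Z = E₁ * D₁p * (D₂ * (D₂p * Z)) := by
        rw [hX₁, mul_mul_eq_of_one_sub_mul_mul_eq_zero hZ]
    _ = E₁ * D₁p * D₁ * Q * D₂p * Z := by rw [hD]; simp only [Matrix.mul_assoc]
    _ = C₁ * X₂ * Z := by
        rw [mul_mul_eq_of_mul_one_sub_mul_eq_zero hE₁, ← hE, hC, Matrix.mul_assoc P C₂ X₂, hX₂]
        simp only [Matrix.mul_assoc]

theorem mul_mul_eq_of_mul_lproj_eq_zero [Fintype m₁] [Fintype m₂] [Fintype n] [Fintype p]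
    [Fintype q₁] [DecidableEq n] [DecidableEq m₂]
    (h : NestedPair C₁ D₁ E₁ C₂ D₂ E₂) (hE₂ : (1 - C₂ * C₂p) * E₂ = 0) {X₁ X₂ : Matrix n p Hq}
    (hX₁ : X₁ * D₁ = C₁p * E₁) (hX₂ : X₂ * D₂ = C₂p * E₂) {Z : Matrix k n Hq}
    (hZ : Z * (1 - C₁p * C₁) = 0) : Z * X₁ * D₂ = Z * X₂ * D₂ := by
  obtain ⟨P, Q, hC, hD, hE⟩ := h
  calc Z * X₁ * D₂ = Z * C₁p * (P * (C₂ * (C₂p * E₂))) := by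
        rw [hD, mul_mul_eq_of_one_sub_mul_mul_eq_zero hE₂, hE, ← Matrix.mul_assoc,
          Matrix.mul_assoc Z, hX₁]
        simp only [Matrix.mul_assoc]
    _ = Z * X₂ * D₂ := by
        rw [← Matrix.mul_assoc P, ← hC, Matrix.mul_assoc Z X₂, hX₂]
        conv_rhs => rw [← mul_mul_eq_of_mul_one_sub_mul_eq_zero hZ]
        simp only [Matrix.mul_assoc]

theorem particular_mul_eq [Fintype m₁] [Fintype m₂] [Fintype n] [Fintype p] [Fintype q₁]
    [Fintype q₂] [DecidableEq m₂] [DecidableEq n] [DecidableEq q₁] [DecidableEq q₂]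
    (h : NestedPair C₁ D₁ E₁ C₂ D₂ E₂) (hE₁ : E₁ * (1 - D₁p * D₁) = 0)
    (hE₂ : (1 - C₂ * C₂p) * E₂ = 0) (hE₂' : E₂ * (1 - D₂p * D₂) = 0) {F : Matrix n p Hq}
    (hF : F = C₁p * E₁ * D₁p + (1 - C₁p * C₁) * C₂p * E₂ * D₂p) : F * D₂ = C₂p * E₂ := by
  obtain ⟨P, Q, hC, hD, hE⟩ := h
  have hcross : E₁ * D₁p * D₂ = C₁ * (C₂p * E₂) := by
    rw [hD, ← Matrix.mul_assoc, mul_mul_eq_of_mul_one_sub_mul_eq_zero hE₁, ← hE, hC,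
      Matrix.mul_assoc P, mul_mul_eq_of_one_sub_mul_mul_eq_zero hE₂]
  calc F * D₂ = C₁p * (E₁ * D₁p * D₂) + (1 - C₁p * C₁) * C₂p * (E₂ * D₂p * D₂) := by
        rw [hF]
        simp only [Matrix.add_mul, Matrix.mul_assoc]
    _ = C₁p * C₁ * (C₂p * E₂) + (1 - C₁p * C₁) * (C₂p * E₂) := by
        rw [hcross, mul_mul_eq_of_mul_one_sub_mul_eq_zero hE₂']
        simp only [Matrix.mul_assoc]
    _ = C₂p * E₂ := by rw [← Matrix.add_mul, add_sub_cancel, Matrix.one_mul]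

theorem solve_iff [Fintype m₁] [Fintype m₂] [Fintype n] [Fintype p] [Fintype q₁] [Fintype q₂]
    [DecidableEq m₁] [DecidableEq m₂] [DecidableEq n] [DecidableEq p] [DecidableEq q₁]
    [DecidableEq q₂] (h : NestedPair C₁ D₁ E₁ C₂ D₂ E₂) (hC₁ : IsMPInv C₁ C₁p)
    (hD₁ : IsMPInv D₁ D₁p) (hC₂ : IsMPInv C₂ C₂p) (hD₂ : IsMPInv D₂ D₂p)
    (hE₁ : (1 - C₁ * C₁p) * E₁ = 0) (hE₁' : E₁ * (1 - D₁p * D₁) = 0)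
    (hE₂ : (1 - C₂ * C₂p) * E₂ = 0) (hE₂' : E₂ * (1 - D₂p * D₂) = 0) {F : Matrix n p Hq}
    (hF : F = C₁p * E₁ * D₁p + (1 - C₁p * C₁) * C₂p * E₂ * D₂p) {Y : Matrix n p Hq} :
    (C₁ * Y * D₁ = E₁ ∧ C₂ * Y * D₂ = E₂) ↔
      ∃ U V W : Matrix n p Hq,
        (1 - C₂p * C₂) * U + V * (1 - D₁ * D₁p) + (1 - C₁p * C₁) * W * (1 - D₂ * D₂p)
          = Y - F := by
  have hF₁ : C₁ * F * D₁ = E₁ := by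
    rw [mul_particular_eq hC₁ hE₁ hF, mul_mul_eq_of_mul_one_sub_mul_eq_zero hE₁']
  have hF₂ : C₂ * F * D₂ = E₂ := by
    rw [Matrix.mul_assoc, h.particular_mul_eq hE₁' hE₂ hE₂' hF,
      mul_mul_eq_of_one_sub_mul_mul_eq_zero hE₂]
  rw [← mul_mul_eq_zero_and_mul_mul_eq_zero_iff hC₁ hD₁ hC₂ hD₂ (h.mul_lproj_eq_zero hC₂)
    (h.rproj_mul_eq_zero hD₁), Matrix.mul_sub, Matrix.sub_mul, hF₁, Matrix.mul_sub,
    Matrix.sub_mul, hF₂, sub_eq_zero, sub_eq_zero]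

end NestedPair

end NestedPairs

section FourEquations

variable {m n p q : Type*} [Fintype m] [Fintype n] [Fintype p] [Fintype q] [DecidableEq m]
  [DecidableEq q]
  {C₁ C₂ C₃ C₄ : Matrix m n Hq} {D₁ D₂ D₃ D₄ : Matrix p q Hq} {E₁ E₂ E₃ E₄ : Matrix m q Hq}
  {C₁p C₂p C₃p C₄p : Matrix n m Hq} {D₁p D₂p D₃p D₄p : Matrix q p Hq}

theorem exists_four_eq_iff_exists_six_term [DecidableEq n] [DecidableEq p]
    (h₁₂ : NestedPair C₁ D₁ E₁ C₂ D₂ E₂) (h₃₄ : NestedPair C₃ D₃ E₃ C₄ D₄ E₄)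
    (hC₁ : IsMPInv C₁ C₁p) (hC₂ : IsMPInv C₂ C₂p) (hC₃ : IsMPInv C₃ C₃p) (hC₄ : IsMPInv C₄ C₄p)
    (hD₁ : IsMPInv D₁ D₁p) (hD₂ : IsMPInv D₂ D₂p) (hD₃ : IsMPInv D₃ D₃p) (hD₄ : IsMPInv D₄ D₄p)
    (hE₁ : (1 - C₁ * C₁p) * E₁ = 0) (hE₁' : E₁ * (1 - D₁p * D₁) = 0)
    (hE₂ : (1 - C₂ * C₂p) * E₂ = 0) (hE₂' : E₂ * (1 - D₂p * D₂) = 0)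
    (hE₃ : (1 - C₃ * C₃p) * E₃ = 0) (hE₃' : E₃ * (1 - D₃p * D₃) = 0)
    (hE₄ : (1 - C₄ * C₄p) * E₄ = 0) (hE₄' : E₄ * (1 - D₄p * D₄) = 0) {F₁ F₂ : Matrix n p Hq}
    (hF₁ : F₁ = C₁p * E₁ * D₁p + (1 - C₁p * C₁) * C₂p * E₂ * D₂p)
    (hF₂ : F₂ = C₃p * E₃ * D₃p + (1 - C₃p * C₃) * C₄p * E₄ * D₄p) :
    (∃ Y : Matrix n p Hq,
        C₁ * Y * D₁ = E₁ ∧ C₂ * Y * D₂ = E₂ ∧ C₃ * Y * D₃ = E₃ ∧ C₄ * Y * D₄ = E₄) ↔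
      ∃ (U₁ U₂ V₁ V₂ W₁ W₂ : Matrix n p Hq),
        (1 - C₂p * C₂) * U₁ + (1 - C₄p * C₄) * U₂ + V₁ * (1 - D₁ * D₁p) + V₂ * (1 - D₃ * D₃p)
          + (1 - C₁p * C₁) * W₁ * (1 - D₂ * D₂p) + (1 - C₃p * C₃) * W₂ * (1 - D₄ * D₄p)
          = F₂ - F₁ := by
  have hsol : ∀ Y : Matrix n p Hq,
      (C₁ * Y * D₁ = E₁ ∧ C₂ * Y * D₂ = E₂ ∧ C₃ * Y * D₃ = E₃ ∧ C₄ * Y * D₄ = E₄) ↔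
        (∃ U V W : Matrix n p Hq, (1 - C₂p * C₂) * U + V * (1 - D₁ * D₁p)
          + (1 - C₁p * C₁) * W * (1 - D₂ * D₂p) = Y - F₁) ∧
        (∃ U V W : Matrix n p Hq, (1 - C₄p * C₄) * U + V * (1 - D₃ * D₃p)
          + (1 - C₃p * C₃) * W * (1 - D₄ * D₄p) = Y - F₂) := fun Y => by
    rw [← h₁₂.solve_iff hC₁ hD₁ hC₂ hD₂ hE₁ hE₁' hE₂ hE₂' hF₁,
      ← h₃₄.solve_iff hC₃ hD₃ hC₄ hD₄ hE₃ hE₃' hE₄ hE₄' hF₂, and_assoc]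
  simp only [hsol]
  constructor
  · rintro ⟨Y, ⟨U₁, V₁, W₁, e₁⟩, ⟨U₂, V₂, W₂, e₂⟩⟩
    refine ⟨U₁, -U₂, V₁, -V₂, W₁, -W₂, ?_⟩
    rw [show F₂ - F₁ = (Y - F₁) - (Y - F₂) by abel, ← e₁, ← e₂]
    simp only [Matrix.mul_neg, Matrix.neg_mul]
    abel
  · rintro ⟨U₁, U₂, V₁, V₂, W₁, W₂, e⟩
    rw [eq_sub_iff_add_eq] at e
    refine ⟨F₁ + ((1 - C₂p * C₂) * U₁ + V₁ * (1 - D₁ * D₁p) + (1 - C₁p * C₁) * W₁ * (1 - D₂ * D₂p)),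
      ⟨U₁, V₁, W₁, by abel⟩, ⟨-U₂, -V₂, -W₂, ?_⟩⟩
    rw [← e]
    simp only [Matrix.mul_neg, Matrix.neg_mul]
    abel

theorem exists_four_eq_iff_of_consistent [DecidableEq n] [DecidableEq p]
    (h₁₂ : NestedPair C₁ D₁ E₁ C₂ D₂ E₂) (h₃₄ : NestedPair C₃ D₃ E₃ C₄ D₄ E₄)
    (h₁₃ : NestedPair C₁ D₁ E₁ C₃ D₃ E₃) (h₂₄ : NestedPair C₂ D₂ E₂ C₄ D₄ E₄)
    (hC₁ : IsMPInv C₁ C₁p) (hC₂ : IsMPInv C₂ C₂p) (hC₃ : IsMPInv C₃ C₃p) (hC₄ : IsMPInv C₄ C₄p)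
    (hD₁ : IsMPInv D₁ D₁p) (hD₂ : IsMPInv D₂ D₂p) (hD₃ : IsMPInv D₃ D₃p) (hD₄ : IsMPInv D₄ D₄p)
    {C₁₁ : Matrix n (n ⊕ n) Hq} {C₁₁p : Matrix (n ⊕ n) n Hq}
    (hC₁₁ : C₁₁ = fromCols (1 - C₂p * C₂) (1 - C₄p * C₄)) (hC₁₁p : IsMPInv C₁₁ C₁₁p)
    {D₁₁ : Matrix (p ⊕ p) p Hq} {D₁₁p : Matrix p (p ⊕ p) Hq}
    (hD₁₁ : D₁₁ = fromRows (1 - D₁ * D₁p) (1 - D₃ * D₃p)) (hD₁₁p : IsMPInv D₁₁ D₁₁p)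
    {E₂₂ E₂₂p : Matrix n n Hq} (hE₂₂ : E₂₂ = (1 - C₁₁ * C₁₁p) * (1 - C₃p * C₃))
    (hE₂₂p : IsMPInv E₂₂ E₂₂p) {E₃₃ E₃₃p : Matrix p p Hq}
    (hE₃₃ : E₃₃ = (1 - D₂ * D₂p) * (1 - D₁₁p * D₁₁)) (hE₃₃p : IsMPInv E₃₃ E₃₃p)
    {F₁ F₂ E : Matrix n p Hq} (hF₁ : F₁ = C₁p * E₁ * D₁p + (1 - C₁p * C₁) * C₂p * E₂ * D₂p)
    (hF₂ : F₂ = C₃p * E₃ * D₃p + (1 - C₃p * C₃) * C₄p * E₄ * D₄p)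
    (hE : E = (1 - C₁₁ * C₁₁p) * (F₂ - F₁) * (1 - D₁₁p * D₁₁))
    (hE₁ : (1 - C₁ * C₁p) * E₁ = 0) (hE₁' : E₁ * (1 - D₁p * D₁) = 0)
    (hE₂ : (1 - C₂ * C₂p) * E₂ = 0) (hE₂' : E₂ * (1 - D₂p * D₂) = 0)
    (hE₃ : (1 - C₃ * C₃p) * E₃ = 0) (hE₃' : E₃ * (1 - D₃p * D₃) = 0)
    (hE₄ : (1 - C₄ * C₄p) * E₄ = 0) (hE₄' : E₄ * (1 - D₄p * D₄) = 0) :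
    (∃ Y : Matrix n p Hq,
        C₁ * Y * D₁ = E₁ ∧ C₂ * Y * D₂ = E₂ ∧ C₃ * Y * D₃ = E₃ ∧ C₄ * Y * D₄ = E₄) ↔
      (1 - E₂₂ * E₂₂p) * E * (1 - E₃₃p * E₃₃) = 0 := by
  have hR₃L : (1 - D₃ * D₃p) * (1 - D₁₁p * D₁₁) = 0 :=
    hD₁₁p.mul_lproj_eq_zero (X := fromCols 0 1)
      (by rw [hD₁₁, fromCols_mul_fromRows, Matrix.zero_mul, Matrix.one_mul, zero_add])
  have hRL₂ : (1 - C₁₁ * C₁₁p) * (1 - C₂p * C₂) = 0 :=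
    hC₁₁p.rproj_mul_eq_zero (X := fromRows 1 0)
      (by rw [hC₁₁, fromCols_mul_fromRows, Matrix.mul_one, Matrix.mul_zero, add_zero])
  have hC₁F : C₁ * ((F₂ - F₁) * (1 - D₁₁p * D₁₁)) = 0 := by
    rw [← Matrix.mul_assoc, Matrix.mul_sub C₁, Matrix.sub_mul,
      h₁₃.mul_mul_eq_of_rproj_mul_eq_zero hE₁' (mul_particular_eq hC₁ hE₁ hF₁)
        (mul_particular_eq hC₃ hE₃ hF₂) hR₃L, sub_self]
  have hFD₄ : (1 - C₁₁ * C₁₁p) * (F₂ - F₁) * D₄ = 0 := by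
    rw [Matrix.mul_sub, Matrix.sub_mul,
      h₂₄.mul_mul_eq_of_mul_lproj_eq_zero hE₄ (h₁₂.particular_mul_eq hE₁' hE₂ hE₂' hF₁)
        (h₃₄.particular_mul_eq hE₃' hE₄ hE₄' hF₂) hRL₂, sub_self]
  rw [exists_four_eq_iff_exists_six_term h₁₂ h₃₄ hC₁ hC₂ hC₃ hC₄ hD₁ hD₂ hD₃ hD₄ hE₁ hE₁' hE₂
      hE₂' hE₃ hE₃' hE₄ hE₄' hF₁ hF₂,
    exists_six_term_iff_of_block hC₁₁ hD₁₁ hC₁₁p hD₁₁p, ← hE, ← hE₂₂, ← hE₃₃]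
  refine exists_two_term_iff_of_eq_mul hE₂₂p hE₃₃p (K := (F₂ - F₁) * (1 - D₁₁p * D₁₁))
    (K' := (1 - C₁₁ * C₁₁p) * (F₂ - F₁)) (Q := 1 - D₂ * D₂p) ?_ ?_ ?_
  · rw [hE, Matrix.mul_assoc _ (1 - C₁p * C₁), one_sub_mul_mul_of_mul_eq_zero hC₁F,
      Matrix.mul_assoc]
  · rw [hE, ← Matrix.mul_assoc, mul_one_sub_mul_of_mul_eq_zero hFD₄]
  · rw [hE₃₃, ← Matrix.mul_assoc, mul_one_sub_mul_of_mul_eq_zero (h₂₄.rproj_mul_eq_zero hD₂)]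

theorem exists_four_eq_iff_consistent_and (hC₁ : IsMPInv C₁ C₁p) (hC₂ : IsMPInv C₂ C₂p)
    (hC₃ : IsMPInv C₃ C₃p) (hC₄ : IsMPInv C₄ C₄p) (hD₁ : IsMPInv D₁ D₁p) (hD₂ : IsMPInv D₂ D₂p)
    (hD₃ : IsMPInv D₃ D₃p) (hD₄ : IsMPInv D₄ D₄p) {Q : Prop}
    (hQ : (1 - C₁ * C₁p) * E₁ = 0 → E₁ * (1 - D₁p * D₁) = 0 →
      (1 - C₂ * C₂p) * E₂ = 0 → E₂ * (1 - D₂p * D₂) = 0 →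
      (1 - C₃ * C₃p) * E₃ = 0 → E₃ * (1 - D₃p * D₃) = 0 →
      (1 - C₄ * C₄p) * E₄ = 0 → E₄ * (1 - D₄p * D₄) = 0 →
      ((∃ Y : Matrix n p Hq,
        C₁ * Y * D₁ = E₁ ∧ C₂ * Y * D₂ = E₂ ∧ C₃ * Y * D₃ = E₃ ∧ C₄ * Y * D₄ = E₄) ↔ Q)) :
    (∃ Y : Matrix n p Hq,
        C₁ * Y * D₁ = E₁ ∧ C₂ * Y * D₂ = E₂ ∧ C₃ * Y * D₃ = E₃ ∧ C₄ * Y * D₄ = E₄) ↔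
      ((1 - C₁ * C₁p) * E₁ = 0 ∧ E₁ * (1 - D₁p * D₁) = 0 ∧
        (1 - C₂ * C₂p) * E₂ = 0 ∧ E₂ * (1 - D₂p * D₂) = 0 ∧
        (1 - C₃ * C₃p) * E₃ = 0 ∧ E₃ * (1 - D₃p * D₃) = 0 ∧
        (1 - C₄ * C₄p) * E₄ = 0 ∧ E₄ * (1 - D₄p * D₄) = 0 ∧ Q) := by
  constructor
  · rintro ⟨Y, h₁, h₂, h₃, h₄⟩
    obtain ⟨c₁, c₁'⟩ := (hC₁.exists_mul_mul_eq_iff hD₁).1 ⟨Y, h₁⟩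
    obtain ⟨c₂, c₂'⟩ := (hC₂.exists_mul_mul_eq_iff hD₂).1 ⟨Y, h₂⟩
    obtain ⟨c₃, c₃'⟩ := (hC₃.exists_mul_mul_eq_iff hD₃).1 ⟨Y, h₃⟩
    obtain ⟨c₄, c₄'⟩ := (hC₄.exists_mul_mul_eq_iff hD₄).1 ⟨Y, h₄⟩
    exact ⟨c₁, c₁', c₂, c₂', c₃, c₃', c₄, c₄',
      (hQ c₁ c₁' c₂ c₂' c₃ c₃' c₄ c₄').1 ⟨Y, h₁, h₂, h₃, h₄⟩⟩
  · rintro ⟨c₁, c₁', c₂, c₂', c₃, c₃', c₄, c₄', hq⟩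
    exact (hQ c₁ c₁' c₂ c₂' c₃ c₃' c₄ c₄').2 hq

end FourEquations

section ThreeTerm

variable {m n₁ p₁ n₂ p₂ n₃ p₃ q : Type*} [Fintype m] [Fintype n₁] [Fintype p₁] [Fintype n₂]
  [Fintype p₂] [Fintype q] [DecidableEq m] [DecidableEq q]
  {A₁ : Matrix m n₁ Hq} {B₁ : Matrix p₁ q Hq} {A₂ : Matrix m n₂ Hq} {B₂ : Matrix p₂ q Hq}
  {A₃ : Matrix m n₃ Hq} {B₃ : Matrix p₃ q Hq} {T : Matrix m q Hq}
  {A₁p : Matrix n₁ m Hq} {B₁p : Matrix q p₁ Hq} {A₂p : Matrix n₂ m Hq} {B₂p : Matrix q p₂ Hq}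
  {M : Matrix m n₂ Hq} {Mp : Matrix n₂ m Hq} {N : Matrix p₂ q Hq} {Np : Matrix q p₂ Hq}
  {C : Matrix m m Hq} {D : Matrix q q Hq}

theorem exists_three_term_iff [Fintype n₃] [Fintype p₃] [DecidableEq n₂]
    (hA₁ : IsMPInv A₁ A₁p) (hB₁ : IsMPInv B₁ B₁p) (hA₂ : IsMPInv A₂ A₂p) (hB₂ : IsMPInv B₂ B₂p)
    (hM : M = (1 - A₁ * A₁p) * A₂) (hMp : IsMPInv M Mp) (hN : N = B₂ * (1 - B₁p * B₁))
    (hNp : IsMPInv N Np) (hC : C = (1 - M * Mp) * (1 - A₁ * A₁p))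
    (hD : D = (1 - B₁p * B₁) * (1 - Np * N)) :
    (∃ (Y₁ : Matrix n₁ p₁ Hq) (Y₂ : Matrix n₂ p₂ Hq) (Y₃ : Matrix n₃ p₃ Hq),
        A₁ * Y₁ * B₁ + A₂ * Y₂ * B₂ + A₃ * Y₃ * B₃ = T) ↔
      ∃ Y : Matrix n₃ p₃ Hq, C * A₃ * Y * B₃ = C * T ∧
        (1 - A₁ * A₁p) * A₃ * Y * (B₃ * (1 - B₂p * B₂)) = (1 - A₁ * A₁p) * T * (1 - B₂p * B₂) ∧
        (1 - A₂ * A₂p) * A₃ * Y * (B₃ * (1 - B₁p * B₁)) = (1 - A₂ * A₂p) * T * (1 - B₁p * B₁) ∧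
        A₃ * Y * (B₃ * D) = T * D := by
  have hshift : (∃ (Y₁ : Matrix n₁ p₁ Hq) (Y₂ : Matrix n₂ p₂ Hq) (Y₃ : Matrix n₃ p₃ Hq),
      A₁ * Y₁ * B₁ + A₂ * Y₂ * B₂ + A₃ * Y₃ * B₃ = T) ↔
        ∃ (Y₃ : Matrix n₃ p₃ Hq) (Y₁ : Matrix n₁ p₁ Hq) (Y₂ : Matrix n₂ p₂ Hq),
          A₁ * Y₁ * B₁ + A₂ * Y₂ * B₂ = T - A₃ * Y₃ * B₃ := by
    simp only [eq_sub_iff_add_eq]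
    exact ⟨fun ⟨Y₁, Y₂, Y₃, h⟩ => ⟨Y₃, Y₁, Y₂, h⟩, fun ⟨Y₃, Y₁, Y₂, h⟩ => ⟨Y₁, Y₂, Y₃, h⟩⟩
  rw [hshift]
  refine exists_congr fun Y => ?_
  rw [exists_two_term_iff hA₁ hB₁ hA₂ hB₂ hM hMp hN hNp, ← hC, Matrix.mul_assoc _ (1 - B₁p * B₁),
    ← hD]
  generalize 1 - A₁ * A₁p = R₁
  generalize 1 - A₂ * A₂p = R₂
  generalize 1 - B₁p * B₁ = L₁
  generalize 1 - B₂p * B₂ = L₂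
  simp only [Matrix.mul_sub, Matrix.sub_mul, sub_eq_zero, Matrix.mul_assoc]
  exact ⟨fun ⟨h₁, h₂, h₃, h₄⟩ => ⟨h₁.symm, h₂.symm, h₃.symm, h₄.symm⟩,
    fun ⟨h₁, h₂, h₃, h₄⟩ => ⟨h₁.symm, h₂.symm, h₃.symm, h₄.symm⟩⟩

theorem nestedPairs_of_three_term (hA₁ : IsMPInv A₁ A₁p) (hM : M = (1 - A₁ * A₁p) * A₂)
    (hMp : IsMPInv M Mp) (hN : N = B₂ * (1 - B₁p * B₁)) (hNp : IsMPInv N Np)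
    (hC : C = (1 - M * Mp) * (1 - A₁ * A₁p)) (hD : D = (1 - B₁p * B₁) * (1 - Np * N))
    {C₁ C₂ C₃ C₄ : Matrix m n₃ Hq} {D₁ D₂ D₃ D₄ : Matrix p₃ q Hq}
    {E₁ E₂ E₃ E₄ : Matrix m q Hq} (hC₁ : C₁ = C * A₃) (hC₂ : C₂ = (1 - A₁ * A₁p) * A₃)
    (hC₃ : C₃ = (1 - A₂ * A₂p) * A₃) (hC₄ : C₄ = A₃) (hD₁ : D₁ = B₃)
    (hD₂ : D₂ = B₃ * (1 - B₂p * B₂)) (hD₃ : D₃ = B₃ * (1 - B₁p * B₁)) (hD₄ : D₄ = B₃ * D)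
    (hE₁ : E₁ = C * T) (hE₂ : E₂ = (1 - A₁ * A₁p) * T * (1 - B₂p * B₂))
    (hE₃ : E₃ = (1 - A₂ * A₂p) * T * (1 - B₁p * B₁)) (hE₄ : E₄ = T * D) :
    NestedPair C₁ D₁ E₁ C₂ D₂ E₂ ∧ NestedPair C₃ D₃ E₃ C₄ D₄ E₄ ∧
      NestedPair C₁ D₁ E₁ C₃ D₃ E₃ ∧ NestedPair C₂ D₂ E₂ C₄ D₄ E₄ := by
  have hCR₁ : C * (1 - A₁ * A₁p) = C := by
    rw [hC, Matrix.mul_assoc, mul_one_sub_mul_of_mul_eq_zero hA₁.rproj_mul_self]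
  have hCR₂ : C * (1 - A₂ * A₂p) = C :=
    mul_one_sub_mul_of_mul_eq_zero (by rw [hC, Matrix.mul_assoc, ← hM, hMp.rproj_mul_self])
  have hLD : (1 - B₂p * B₂) * D = D :=
    one_sub_mul_mul_of_mul_eq_zero (by rw [hD, ← Matrix.mul_assoc, ← hN, hNp.self_mul_lproj])
  subst hC₁ hC₂ hC₃ hC₄ hD₁ hD₂ hD₃ hD₄ hE₁ hE₂ hE₃ hE₄
  refine ⟨⟨C, 1 - B₂p * B₂, ?_, rfl, ?_⟩, ⟨1 - A₂ * A₂p, 1 - Np * N, rfl, ?_, ?_⟩,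
    ⟨C, 1 - B₁p * B₁, ?_, rfl, ?_⟩, ⟨1 - A₁ * A₁p, D, rfl, ?_, ?_⟩⟩
  · rw [← Matrix.mul_assoc, hCR₁]
  · rw [← Matrix.mul_assoc, ← Matrix.mul_assoc, hCR₁]
  · rw [hD, Matrix.mul_assoc]
  · rw [hD]
    simp only [Matrix.mul_assoc]
  · rw [← Matrix.mul_assoc, hCR₂]
  · rw [← Matrix.mul_assoc, ← Matrix.mul_assoc, hCR₂]
  · rw [Matrix.mul_assoc, hLD]
  · rw [Matrix.mul_assoc _ (1 - B₂p * B₂), hLD, Matrix.mul_assoc]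

end ThreeTerm

theorem stmt16_general {m q n₁ p₁ n₂ p₂ n₃ p₃ : ℕ}
    (A₁₁ : Matrix (Fin m) (Fin n₁) Hq) (B₁₁ : Matrix (Fin p₁) (Fin q) Hq)
    (A₂₂ : Matrix (Fin m) (Fin n₂) Hq) (B₂₂ : Matrix (Fin p₂) (Fin q) Hq)
    (A₃₃ : Matrix (Fin m) (Fin n₃) Hq) (B₃₃ : Matrix (Fin p₃) (Fin q) Hq)
    (T₁ : Matrix (Fin m) (Fin q) Hq)
    (A₁₁p : Matrix (Fin n₁) (Fin m) Hq) (B₁₁p : Matrix (Fin q) (Fin p₁) Hq)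
    (A₂₂p : Matrix (Fin n₂) (Fin m) Hq) (B₂₂p : Matrix (Fin q) (Fin p₂) Hq)
    (hA₁₁ : IsMPInv A₁₁ A₁₁p) (hB₁₁ : IsMPInv B₁₁ B₁₁p)
    (hA₂₂ : IsMPInv A₂₂ A₂₂p) (hB₂₂ : IsMPInv B₂₂ B₂₂p)
    (M₁ : Matrix (Fin m) (Fin n₂) Hq) (hM₁ : M₁ = (1 - A₁₁ * A₁₁p) * A₂₂)
    (N₁ : Matrix (Fin p₂) (Fin q) Hq) (hN₁ : N₁ = B₂₂ * (1 - B₁₁p * B₁₁))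
    (M₁p : Matrix (Fin n₂) (Fin m) Hq) (hM₁p : IsMPInv M₁ M₁p)
    (N₁p : Matrix (Fin q) (Fin p₂) Hq) (hN₁p : IsMPInv N₁ N₁p)
    (C : Matrix (Fin m) (Fin m) Hq) (hC : C = (1 - M₁ * M₁p) * (1 - A₁₁ * A₁₁p))
    (D : Matrix (Fin q) (Fin q) Hq) (hD : D = (1 - B₁₁p * B₁₁) * (1 - N₁p * N₁))
    (C₁ : Matrix (Fin m) (Fin n₃) Hq) (hC₁ : C₁ = C * A₃₃)
    (C₂ : Matrix (Fin m) (Fin n₃) Hq) (hC₂ : C₂ = (1 - A₁₁ * A₁₁p) * A₃₃)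
    (C₃ : Matrix (Fin m) (Fin n₃) Hq) (hC₃ : C₃ = (1 - A₂₂ * A₂₂p) * A₃₃)
    (C₄ : Matrix (Fin m) (Fin n₃) Hq) (hC₄ : C₄ = A₃₃)
    (D₁ : Matrix (Fin p₃) (Fin q) Hq) (hD₁ : D₁ = B₃₃)
    (D₂ : Matrix (Fin p₃) (Fin q) Hq) (hD₂ : D₂ = B₃₃ * (1 - B₂₂p * B₂₂))
    (D₃ : Matrix (Fin p₃) (Fin q) Hq) (hD₃ : D₃ = B₃₃ * (1 - B₁₁p * B₁₁))
    (D₄ : Matrix (Fin p₃) (Fin q) Hq) (hD₄ : D₄ = B₃₃ * D)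
    (E₁ : Matrix (Fin m) (Fin q) Hq) (hE₁ : E₁ = C * T₁)
    (E₂ : Matrix (Fin m) (Fin q) Hq)
    (hE₂ : E₂ = (1 - A₁₁ * A₁₁p) * T₁ * (1 - B₂₂p * B₂₂))
    (E₃ : Matrix (Fin m) (Fin q) Hq)
    (hE₃ : E₃ = (1 - A₂₂ * A₂₂p) * T₁ * (1 - B₁₁p * B₁₁))
    (E₄ : Matrix (Fin m) (Fin q) Hq) (hE₄ : E₄ = T₁ * D)
    (C₁p : Matrix (Fin n₃) (Fin m) Hq) (hC₁p : IsMPInv C₁ C₁p)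
    (C₂p : Matrix (Fin n₃) (Fin m) Hq) (hC₂p : IsMPInv C₂ C₂p)
    (C₃p : Matrix (Fin n₃) (Fin m) Hq) (hC₃p : IsMPInv C₃ C₃p)
    (C₄p : Matrix (Fin n₃) (Fin m) Hq) (hC₄p : IsMPInv C₄ C₄p)
    (D₁p : Matrix (Fin q) (Fin p₃) Hq) (hD₁p : IsMPInv D₁ D₁p)
    (D₂p : Matrix (Fin q) (Fin p₃) Hq) (hD₂p : IsMPInv D₂ D₂p)
    (D₃p : Matrix (Fin q) (Fin p₃) Hq) (hD₃p : IsMPInv D₃ D₃p)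
    (D₄p : Matrix (Fin q) (Fin p₃) Hq) (hD₄p : IsMPInv D₄ D₄p)
    (C₁₁ : Matrix (Fin n₃) (Fin n₃ ⊕ Fin n₃) Hq)
    (hC₁₁ : C₁₁ = Matrix.fromCols (1 - C₂p * C₂) (1 - C₄p * C₄))
    (D₁₁ : Matrix (Fin p₃ ⊕ Fin p₃) (Fin p₃) Hq)
    (hD₁₁ : D₁₁ = Matrix.fromRows (1 - D₁ * D₁p) (1 - D₃ * D₃p))
    (C₁₁p : Matrix (Fin n₃ ⊕ Fin n₃) (Fin n₃) Hq) (hC₁₁p : IsMPInv C₁₁ C₁₁p)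
    (D₁₁p : Matrix (Fin p₃) (Fin p₃ ⊕ Fin p₃) Hq) (hD₁₁p : IsMPInv D₁₁ D₁₁p)
    (D₂₂ : Matrix (Fin p₃) (Fin p₃) Hq) (hD₂₂ : D₂₂ = 1 - D₂ * D₂p)
    (C₃₃ : Matrix (Fin n₃) (Fin n₃) Hq) (hC₃₃ : C₃₃ = 1 - C₃p * C₃)
    (E₂₂ : Matrix (Fin n₃) (Fin n₃) Hq) (hE₂₂ : E₂₂ = (1 - C₁₁ * C₁₁p) * C₃₃)
    (E₃₃ : Matrix (Fin p₃) (Fin p₃) Hq) (hE₃₃ : E₃₃ = D₂₂ * (1 - D₁₁p * D₁₁))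
    (E₂₂p : Matrix (Fin n₃) (Fin n₃) Hq) (hE₂₂p : IsMPInv E₂₂ E₂₂p)
    (E₃₃p : Matrix (Fin p₃) (Fin p₃) Hq) (hE₃₃p : IsMPInv E₃₃ E₃₃p)
    (F₁ : Matrix (Fin n₃) (Fin p₃) Hq)
    (hF₁ : F₁ = C₁p * E₁ * D₁p + (1 - C₁p * C₁) * C₂p * E₂ * D₂p)
    (F₂ : Matrix (Fin n₃) (Fin p₃) Hq)
    (hF₂ : F₂ = C₃p * E₃ * D₃p + (1 - C₃p * C₃) * C₄p * E₄ * D₄p)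
    (F : Matrix (Fin n₃) (Fin p₃) Hq) (hF : F = F₂ - F₁)
    (E : Matrix (Fin n₃) (Fin p₃) Hq)
    (hE : E = (1 - C₁₁ * C₁₁p) * F * (1 - D₁₁p * D₁₁)) :
    (∃ (Y₁ : Matrix (Fin n₁) (Fin p₁) Hq) (Y₂ : Matrix (Fin n₂) (Fin p₂) Hq)
        (Y₃ : Matrix (Fin n₃) (Fin p₃) Hq),
        A₁₁ * Y₁ * B₁₁ + A₂₂ * Y₂ * B₂₂ + A₃₃ * Y₃ * B₃₃ = T₁) ↔
      ((1 - C₁ * C₁p) * E₁ = 0 ∧ E₁ * (1 - D₁p * D₁) = 0 ∧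
       (1 - C₂ * C₂p) * E₂ = 0 ∧ E₂ * (1 - D₂p * D₂) = 0 ∧
       (1 - C₃ * C₃p) * E₃ = 0 ∧ E₃ * (1 - D₃p * D₃) = 0 ∧
       (1 - C₄ * C₄p) * E₄ = 0 ∧ E₄ * (1 - D₄p * D₄) = 0 ∧
       (1 - E₂₂ * E₂₂p) * E * (1 - E₃₃p * E₃₃) = 0) := by
  obtain ⟨h₁₂, h₃₄, h₁₃, h₂₄⟩ := nestedPairs_of_three_term hA₁₁ hM₁ hM₁p hN₁ hN₁p hC hD hC₁ hC₂
    hC₃ hC₄ hD₁ hD₂ hD₃ hD₄ hE₁ hE₂ hE₃ hE₄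
  rw [exists_three_term_iff hA₁₁ hB₁₁ hA₂₂ hB₂₂ hM₁ hM₁p hN₁ hN₁p hC hD, ← hC₁, ← hC₂, ← hC₃,
    ← hC₄, ← hD₂, ← hD₃, ← hD₄, ← hD₁, ← hE₁, ← hE₂, ← hE₃, ← hE₄]
  exact exists_four_eq_iff_consistent_and hC₁p hC₂p hC₃p hC₄p hD₁p hD₂p hD₃p hD₄p
    (exists_four_eq_iff_of_consistent h₁₂ h₃₄ h₁₃ h₂₄ hC₁p hC₂p hC₃p hC₄p hD₁p hD₂p hD₃p hD₄p
      hC₁₁ hC₁₁p hD₁₁ hD₁₁p (by rw [hE₂₂, hC₃₃]) hE₂₂p (by rw [hE₃₃, hD₂₂]) hE₃₃p hF₁ hF₂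
      (by rw [hE, hF]))

/-- Solvability conditions for the three-term two-sided Sylvester equation
`A₁₁Y₁B₁₁ + A₂₂Y₂B₂₂ + A₃₃Y₃B₃₃ = T₁`. -/
theorem stmt16 {m q n₁ p₁ n₂ p₂ n₃ p₃ : ℕ}
    (A₁₁ : Matrix (Fin m) (Fin n₁) Hq) (B₁₁ : Matrix (Fin p₁) (Fin q) Hq)
    (A₂₂ : Matrix (Fin m) (Fin n₂) Hq) (B₂₂ : Matrix (Fin p₂) (Fin q) Hq)
    (A₃₃ : Matrix (Fin m) (Fin n₃) Hq) (B₃₃ : Matrix (Fin p₃) (Fin q) Hq)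
    (T₁ : Matrix (Fin m) (Fin q) Hq)
    (A₁₁p : Matrix (Fin n₁) (Fin m) Hq) (B₁₁p : Matrix (Fin q) (Fin p₁) Hq)
    (A₂₂p : Matrix (Fin n₂) (Fin m) Hq) (B₂₂p : Matrix (Fin q) (Fin p₂) Hq)
    (hA₁₁ : IsMPInv A₁₁ A₁₁p) (hB₁₁ : IsMPInv B₁₁ B₁₁p)
    (hA₂₂ : IsMPInv A₂₂ A₂₂p) (hB₂₂ : IsMPInv B₂₂ B₂₂p)
    (M₁ : Matrix (Fin m) (Fin n₂) Hq) (hM₁ : M₁ = (1 - A₁₁ * A₁₁p) * A₂₂)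
    (N₁ : Matrix (Fin p₂) (Fin q) Hq) (hN₁ : N₁ = B₂₂ * (1 - B₁₁p * B₁₁))
    (M₁p : Matrix (Fin n₂) (Fin m) Hq) (hM₁p : IsMPInv M₁ M₁p)
    (N₁p : Matrix (Fin q) (Fin p₂) Hq) (hN₁p : IsMPInv N₁ N₁p)
    (C : Matrix (Fin m) (Fin m) Hq) (hC : C = (1 - M₁ * M₁p) * (1 - A₁₁ * A₁₁p))
    (D : Matrix (Fin q) (Fin q) Hq) (hD : D = (1 - B₁₁p * B₁₁) * (1 - N₁p * N₁))
    (C₁ : Matrix (Fin m) (Fin n₃) Hq) (hC₁ : C₁ = C * A₃₃)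
    (C₂ : Matrix (Fin m) (Fin n₃) Hq) (hC₂ : C₂ = (1 - A₁₁ * A₁₁p) * A₃₃)
    (C₃ : Matrix (Fin m) (Fin n₃) Hq) (hC₃ : C₃ = (1 - A₂₂ * A₂₂p) * A₃₃)
    (C₄ : Matrix (Fin m) (Fin n₃) Hq) (hC₄ : C₄ = A₃₃)
    (D₁ : Matrix (Fin p₃) (Fin q) Hq) (hD₁ : D₁ = B₃₃)
    (D₂ : Matrix (Fin p₃) (Fin q) Hq) (hD₂ : D₂ = B₃₃ * (1 - B₂₂p * B₂₂))
    (D₃ : Matrix (Fin p₃) (Fin q) Hq) (hD₃ : D₃ = B₃₃ * (1 - B₁₁p * B₁₁))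
    (D₄ : Matrix (Fin p₃) (Fin q) Hq) (hD₄ : D₄ = B₃₃ * D)
    (E₁ : Matrix (Fin m) (Fin q) Hq) (hE₁ : E₁ = C * T₁)
    (E₂ : Matrix (Fin m) (Fin q) Hq)
    (hE₂ : E₂ = (1 - A₁₁ * A₁₁p) * T₁ * (1 - B₂₂p * B₂₂))
    (E₃ : Matrix (Fin m) (Fin q) Hq)
    (hE₃ : E₃ = (1 - A₂₂ * A₂₂p) * T₁ * (1 - B₁₁p * B₁₁))
    (E₄ : Matrix (Fin m) (Fin q) Hq) (hE₄ : E₄ = T₁ * D)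
    (C₁p : Matrix (Fin n₃) (Fin m) Hq) (hC₁p : IsMPInv C₁ C₁p)
    (C₂p : Matrix (Fin n₃) (Fin m) Hq) (hC₂p : IsMPInv C₂ C₂p)
    (C₃p : Matrix (Fin n₃) (Fin m) Hq) (hC₃p : IsMPInv C₃ C₃p)
    (C₄p : Matrix (Fin n₃) (Fin m) Hq) (hC₄p : IsMPInv C₄ C₄p)
    (D₁p : Matrix (Fin q) (Fin p₃) Hq) (hD₁p : IsMPInv D₁ D₁p)
    (D₂p : Matrix (Fin q) (Fin p₃) Hq) (hD₂p : IsMPInv D₂ D₂p)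
    (D₃p : Matrix (Fin q) (Fin p₃) Hq) (hD₃p : IsMPInv D₃ D₃p)
    (D₄p : Matrix (Fin q) (Fin p₃) Hq) (hD₄p : IsMPInv D₄ D₄p)
    (C₁₁ : Matrix (Fin n₃) (Fin n₃ ⊕ Fin n₃) Hq)
    (hC₁₁ : C₁₁ = Matrix.fromCols (1 - C₂p * C₂) (1 - C₄p * C₄))
    (D₁₁ : Matrix (Fin p₃ ⊕ Fin p₃) (Fin p₃) Hq)
    (hD₁₁ : D₁₁ = Matrix.fromRows (1 - D₁ * D₁p) (1 - D₃ * D₃p))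
    (C₁₁p : Matrix (Fin n₃ ⊕ Fin n₃) (Fin n₃) Hq) (hC₁₁p : IsMPInv C₁₁ C₁₁p)
    (D₁₁p : Matrix (Fin p₃) (Fin p₃ ⊕ Fin p₃) Hq) (hD₁₁p : IsMPInv D₁₁ D₁₁p)
    (C₂₂ : Matrix (Fin n₃) (Fin n₃) Hq) (hC₂₂ : C₂₂ = 1 - C₁p * C₁)
    (D₂₂ : Matrix (Fin p₃) (Fin p₃) Hq) (hD₂₂ : D₂₂ = 1 - D₂ * D₂p)
    (C₃₃ : Matrix (Fin n₃) (Fin n₃) Hq) (hC₃₃ : C₃₃ = 1 - C₃p * C₃)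
    (D₃₃ : Matrix (Fin p₃) (Fin p₃) Hq) (hD₃₃ : D₃₃ = 1 - D₄ * D₄p)
    (E₁₁ : Matrix (Fin n₃) (Fin n₃) Hq) (hE₁₁ : E₁₁ = (1 - C₁₁ * C₁₁p) * C₂₂)
    (E₂₂ : Matrix (Fin n₃) (Fin n₃) Hq) (hE₂₂ : E₂₂ = (1 - C₁₁ * C₁₁p) * C₃₃)
    (E₃₃ : Matrix (Fin p₃) (Fin p₃) Hq) (hE₃₃ : E₃₃ = D₂₂ * (1 - D₁₁p * D₁₁))
    (E₂₂p : Matrix (Fin n₃) (Fin n₃) Hq) (hE₂₂p : IsMPInv E₂₂ E₂₂p)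
    (E₃₃p : Matrix (Fin p₃) (Fin p₃) Hq) (hE₃₃p : IsMPInv E₃₃ E₃₃p)
    (F₁ : Matrix (Fin n₃) (Fin p₃) Hq)
    (hF₁ : F₁ = C₁p * E₁ * D₁p + (1 - C₁p * C₁) * C₂p * E₂ * D₂p)
    (F₂ : Matrix (Fin n₃) (Fin p₃) Hq)
    (hF₂ : F₂ = C₃p * E₃ * D₃p + (1 - C₃p * C₃) * C₄p * E₄ * D₄p)
    (F : Matrix (Fin n₃) (Fin p₃) Hq) (hF : F = F₂ - F₁)
    (E : Matrix (Fin n₃) (Fin p₃) Hq)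
    (hE : E = (1 - C₁₁ * C₁₁p) * F * (1 - D₁₁p * D₁₁)) :
    (∃ (Y₁ : Matrix (Fin n₁) (Fin p₁) Hq) (Y₂ : Matrix (Fin n₂) (Fin p₂) Hq)
        (Y₃ : Matrix (Fin n₃) (Fin p₃) Hq),
        A₁₁ * Y₁ * B₁₁ + A₂₂ * Y₂ * B₂₂ + A₃₃ * Y₃ * B₃₃ = T₁) ↔
      ((1 - C₁ * C₁p) * E₁ = 0 ∧ E₁ * (1 - D₁p * D₁) = 0 ∧
       (1 - C₂ * C₂p) * E₂ = 0 ∧ E₂ * (1 - D₂p * D₂) = 0 ∧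
       (1 - C₃ * C₃p) * E₃ = 0 ∧ E₃ * (1 - D₃p * D₃) = 0 ∧
       (1 - C₄ * C₄p) * E₄ = 0 ∧ E₄ * (1 - D₄p * D₄) = 0 ∧
       (1 - E₂₂ * E₂₂p) * E * (1 - E₃₃p * E₃₃) = 0) :=
  stmt16_general A₁₁ B₁₁ A₂₂ B₂₂ A₃₃ B₃₃ T₁ A₁₁p B₁₁p A₂₂p B₂₂p hA₁₁ hB₁₁ hA₂₂ hB₂₂ M₁ hM₁ N₁ hN₁
    M₁p hM₁p N₁p hN₁p C hC D hD C₁ hC₁ C₂ hC₂ C₃ hC₃ C₄ hC₄ D₁ hD₁ D₂ hD₂ D₃ hD₃ D₄ hD₄ E₁ hE₁ E₂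
    hE₂ E₃ hE₃ E₄ hE₄ C₁p hC₁p C₂p hC₂p C₃p hC₃p C₄p hC₄p D₁p hD₁p D₂p hD₂p D₃p hD₃p D₄p hD₄p C₁₁
    hC₁₁ D₁₁ hD₁₁ C₁₁p hC₁₁p D₁₁p hD₁₁p D₂₂ hD₂₂ C₃₃ hC₃₃ E₂₂ hE₂₂ E₃₃ hE₃₃ E₂₂p hE₂₂p E₃₃p hE₃₃p F₁
    hF₁ F₂ hF₂ F hF E hE
end

section
/- Let C₁, C₂, C₃, C₄ ∈ ℍ^{·×n}, D₁, D₂, D₃, D₄ ∈ ℍ^{p×·} and E₁, E₂, E₃, E₄ be quaternion matrices of conformable sizes, with given Moore–Penrose inverses of C₁, C₂, C₃, C₄, D₁, D₂, D₃, D₄, of F₁₁ := C₂L_{C₁} and F₂₂ := C₄L_{C₃}. Assume the orthogonality conditions C₁L_{C₂} = 0, R_{D₁}D₂ = 0, C₃L_{C₄} = 0, R_{D₃}D₄ = 0 and the consistency conditions R_{Cᵢ}Eᵢ = 0, EᵢL_{Dᵢ} = 0 (i = 1,2,3,4), R_{F₁₁}(E₂ − C₂C₁⁺E₁D₁⁺D₂)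 = 0, R_{F₂₂}(E₄ − C₄C₃⁺E₃D₃⁺D₄) = 0. Put F₁ = C₁⁺E₁D₁⁺ + L_{C₁}C₂⁺E₂D₂⁺, F₂ = C₃⁺E₃D₃⁺ + L_{C₃}C₄⁺E₄D₄⁺, F = F₂ − F₁, C₁₁ = (L_{C₂}, L_{C₄}) (block row), D₁₁ = (R_{D₁}; R_{D₃}) (block column), C₂₂ = L_{C₁}, D₂₂ = R_{D₂}, C₃₃ = L_{C₃}, D₃₃ = R_{D₄}. Then there exists a matrix Y ∈ ℍ^{n×p} satisfying simultaneously C₁YD₁ = E₁, C₂YD₂ = E₂, C₃YD₃ = E₃ and C₄YD₄ = E₄ if and only if there exist matrices V₁, W₁, V₂, W₂, V₃, W₃ such that C₁₁·(V₁; W₁) + (V₂, W₂)·D₁₁ + C₂₂V₃D₂₂ + C₃₃W₃D₃₃ = F. -/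
/-!
The pair `C₁YD₁ = E₁, C₂YD₂ = E₂` has the particular solution `F₁`, and likewise the pair
`C₃YD₃ = E₃, C₄YD₄ = E₄` has `F₂`. The solvability condition on `E₂ - C₂C₁⁺E₁D₁⁺D₂` enters
through the fact that `C₂⁺` is an inner inverse of `F₁₁ = C₂L_{C₁}`, which holds because
`C₁L_{C₂} = 0` forces the orthogonal projections to satisfy `C₁⁺C₁ ≤ C₂⁺C₂`. Under the
orthogonality conditions the homogeneous solutions of the pair are exactly
`L_{C₂}V₁ + V₂R_{D₁} + L_{C₁}V₃R_{D₂}`. Hence `Y` solves all four equations iff `Y - F₁` and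
`F₂ - Y` are homogeneous solutions of the two pairs, and such a `Y` exists iff `F₂ - F₁` is a sum
of homogeneous solutions of the two pairs, which is the block equation.
-/

open Matrix

theorem one_sub_mul_mul_one_sub_of_mul_eq {R : Type*} [Ring R] {p q : R} (hp : p * p = p)
    (hqp : q * p = p) (hpq : p * q = p) : (1 - p) * q * (1 - p) = q * (1 - p) := by
  simp only [sub_mul, mul_sub, one_mul, mul_one, hp, hqp, hpq]
  abel

namespace Matrix

variable {R : Type*} [Ring R] {m m₁ m₂ n p k k₁ k₂ : Type*}

section InnerInverse

variable [Fintype m] [Fintype n]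

theorem mul_one_sub_mul_eq_zero_of_mul_mul_eq [DecidableEq n] {C : Matrix m n R}
    {Cp : Matrix n m R} (h : C * Cp * C = C) : C * (1 - Cp * C) = 0 := by
  rw [Matrix.mul_sub, Matrix.mul_one, ← Matrix.mul_assoc, h, sub_self]

theorem one_sub_mul_mul_eq_zero_of_mul_mul_eq [DecidableEq m] {D : Matrix m n R}
    {Dp : Matrix n m R} (h : D * Dp * D = D) : (1 - D * Dp) * D = 0 := by
  rw [Matrix.sub_mul, Matrix.one_mul, h, sub_self]

theorem mul_mul_eq_of_one_sub_mul_mul_eq_zero_s17 [DecidableEq m] [Fintype p] {A : Matrix m n R}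
    {X Ap : Matrix n m R} {G : Matrix m p R} (hA : A * X * A = A) (hG : (1 - A * Ap) * G = 0) :
    A * X * G = G := by
  have hG' : A * (Ap * G) = G := by
    rw [Matrix.sub_mul, Matrix.one_mul, sub_eq_zero] at hG
    rw [← Matrix.mul_assoc, ← hG]
  rw [← hG', ← Matrix.mul_assoc, hA]

end InnerInverse

section Affine

variable [Fintype n] [Fintype p] {C : Matrix m n R} {D : Matrix p k R} {E : Matrix m k R}
  {F Y : Matrix n p R}

theorem mul_mul_eq_iff_mul_sub_mul_eq_zero (hF : C * F * D = E) :
    C * Y * D = E ↔ C * (Y - F) * D = 0 := by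
  rw [Matrix.mul_sub, Matrix.sub_mul, sub_eq_zero, hF]

theorem mul_mul_eq_iff_mul_sub_mul_eq_zero' (hF : C * F * D = E) :
    C * Y * D = E ↔ C * (F - Y) * D = 0 := by
  rw [Matrix.mul_sub, Matrix.sub_mul, sub_eq_zero, hF, eq_comm]

end Affine

theorem mul_pinv_eq_of_mul_eq [StarRing R] [Fintype m] [Fintype n] {C : Matrix m n R}
    {Cp : Matrix n m R} {P : Matrix n n R} (hP : Pᴴ = P) (hCP : C * P = C)
    (hCp : Cp * C * Cp = Cp) (hCpC : (Cp * C)ᴴ = Cp * C) : P * Cp = Cp := by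
  have hCp' : Cp = Cᴴ * (Cpᴴ * Cp) := by
    conv_lhs => rw [← hCp, ← hCpC, conjTranspose_mul, Matrix.mul_assoc]
  have hPC : P * Cᴴ = Cᴴ := by
    rw [← hP, ← conjTranspose_mul, hCP]
  rw [hCp', ← Matrix.mul_assoc, hPC]

section Pair

variable [Fintype m₁] [Fintype m₂] [Fintype n] [Fintype p] [Fintype k₁] [Fintype k₂]
  [DecidableEq n]
  {C₁ : Matrix m₁ n R} {C₂ : Matrix m₂ n R} {D₁ : Matrix p k₁ R} {D₂ : Matrix p k₂ R}
  {C₁p : Matrix n m₁ R} {C₂p : Matrix n m₂ R} {D₁p : Matrix k₁ p R} {D₂p : Matrix k₂ p R}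

theorem exists_eq_of_pair_homogeneous [DecidableEq p] (horth₁ : C₁ * (1 - C₂p * C₂) = 0)
    (horth₂ : (1 - D₁ * D₁p) * D₂ = 0) {Z : Matrix n p R} (h₁ : C₁ * Z * D₁ = 0)
    (h₂ : C₂ * Z * D₂ = 0) :
    ∃ V₁ V₂ V₃ : Matrix n p R, (1 - C₂p * C₂) * V₁ + V₂ * (1 - D₁ * D₁p)
      + (1 - C₁p * C₁) * V₃ * (1 - D₂ * D₂p) = Z := by
  have hC : C₁ * (C₂p * C₂) = C₁ := by
    rw [Matrix.mul_sub, Matrix.mul_one, sub_eq_zero] at horth₁; exact horth₁.symm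
  have hD : D₁ * D₁p * D₂ = D₂ := by
    rw [Matrix.sub_mul, Matrix.one_mul, sub_eq_zero] at horth₂; exact horth₂.symm
  set S := C₂p * C₂ * Z * (D₁ * D₁p) with hS
  have hC₁S : C₁ * S = 0 := by
    rw [hS, ← Matrix.mul_assoc, ← Matrix.mul_assoc, ← Matrix.mul_assoc, hC, h₁, Matrix.zero_mul]
  have hSD₂ : S * D₂ = 0 := by
    rw [hS, Matrix.mul_assoc, hD, show C₂p * C₂ * Z * D₂ = C₂p * (C₂ * Z * D₂) by
      simp only [Matrix.mul_assoc], h₂, Matrix.mul_zero]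
  have hS' : (1 - C₁p * C₁) * S * (1 - D₂ * D₂p) = S := by
    rw [Matrix.sub_mul, Matrix.one_mul, Matrix.mul_assoc C₁p, hC₁S, Matrix.mul_zero, sub_zero,
      Matrix.mul_sub, Matrix.mul_one, ← Matrix.mul_assoc, hSD₂, Matrix.zero_mul, sub_zero]
  -- `Z = L_{C₂}Z + (C₂⁺C₂Z)R_{D₁} + S` with `L_{C₁}SR_{D₂} = S`.
  refine ⟨Z, C₂p * C₂ * Z, S, ?_⟩
  rw [hS', hS, Matrix.mul_sub, Matrix.sub_mul, Matrix.one_mul, Matrix.mul_one]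
  abel

theorem pair_homogeneous_of_eq [DecidableEq p] (hC₁ : C₁ * C₁p * C₁ = C₁)
    (hC₂ : C₂ * C₂p * C₂ = C₂) (hD₁ : D₁ * D₁p * D₁ = D₁) (hD₂ : D₂ * D₂p * D₂ = D₂)
    (horth₁ : C₁ * (1 - C₂p * C₂) = 0) (horth₂ : (1 - D₁ * D₁p) * D₂ = 0)
    {Z V₁ V₂ V₃ : Matrix n p R} (hZ : (1 - C₂p * C₂) * V₁ + V₂ * (1 - D₁ * D₁p)
      + (1 - C₁p * C₁) * V₃ * (1 - D₂ * D₂p) = Z) :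
    C₁ * Z * D₁ = 0 ∧ C₂ * Z * D₂ = 0 := by
  have hLC₁ := mul_one_sub_mul_eq_zero_of_mul_mul_eq hC₁
  have hLC₂ := mul_one_sub_mul_eq_zero_of_mul_mul_eq hC₂
  have hRD₁ := one_sub_mul_mul_eq_zero_of_mul_mul_eq hD₁
  have hRD₂ := one_sub_mul_mul_eq_zero_of_mul_mul_eq hD₂
  subst hZ
  constructor
  · simp only [Matrix.mul_add, Matrix.add_mul, ← Matrix.mul_assoc, horth₁, hLC₁, Matrix.zero_mul,
      Matrix.mul_assoc _ (1 - D₁ * D₁p), hRD₁, Matrix.mul_zero, add_zero]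
  · simp only [Matrix.mul_add, Matrix.add_mul, ← Matrix.mul_assoc, hLC₂, Matrix.zero_mul,
      Matrix.mul_assoc _ (1 - D₁ * D₁p), Matrix.mul_assoc _ (1 - D₂ * D₂p), horth₂, hRD₂,
      Matrix.mul_zero, add_zero]

theorem pair_homogeneous_iff [DecidableEq p] (hC₁ : C₁ * C₁p * C₁ = C₁)
    (hC₂ : C₂ * C₂p * C₂ = C₂) (hD₁ : D₁ * D₁p * D₁ = D₁) (hD₂ : D₂ * D₂p * D₂ = D₂)
    (horth₁ : C₁ * (1 - C₂p * C₂) = 0) (horth₂ : (1 - D₁ * D₁p) * D₂ = 0) (Z : Matrix n p R) :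
    C₁ * Z * D₁ = 0 ∧ C₂ * Z * D₂ = 0 ↔ ∃ V₁ V₂ V₃ : Matrix n p R, (1 - C₂p * C₂) * V₁
      + V₂ * (1 - D₁ * D₁p) + (1 - C₁p * C₁) * V₃ * (1 - D₂ * D₂p) = Z :=
  ⟨fun ⟨h₁, h₂⟩ => exists_eq_of_pair_homogeneous horth₁ horth₂ h₁ h₂,
    fun ⟨_, _, _, hZ⟩ => pair_homogeneous_of_eq hC₁ hC₂ hD₁ hD₂ horth₁ horth₂ hZ⟩

variable {E₁ : Matrix m₁ k₁ R} {E₂ : Matrix m₂ k₂ R}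

theorem pair_particular_solution_left [DecidableEq m₁] [DecidableEq k₁] (hC₁ : C₁ * C₁p * C₁ = C₁)
    (hcon₁ : (1 - C₁ * C₁p) * E₁ = 0) (hcon₁' : E₁ * (1 - D₁p * D₁) = 0) :
    C₁ * (C₁p * E₁ * D₁p + (1 - C₁p * C₁) * C₂p * E₂ * D₂p) * D₁ = E₁ := by
  rw [Matrix.sub_mul, Matrix.one_mul, sub_eq_zero] at hcon₁
  rw [Matrix.mul_sub, Matrix.mul_one, sub_eq_zero] at hcon₁'
  simp only [Matrix.mul_add, ← Matrix.mul_assoc,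
    mul_one_sub_mul_eq_zero_of_mul_mul_eq hC₁, Matrix.zero_mul, add_zero]
  rw [← hcon₁, Matrix.mul_assoc, ← hcon₁']

theorem pair_particular_solution_right [StarRing R] [DecidableEq m₂] [DecidableEq k₂]
    (hC₁p : C₁p * C₁ * C₁p = C₁p) (hC₁pC₁ : (C₁p * C₁)ᴴ = C₁p * C₁) (hC₂ : C₂ * C₂p * C₂ = C₂)
    (hC₂pC₂ : (C₂p * C₂)ᴴ = C₂p * C₂) (horth₁ : C₁ * (1 - C₂p * C₂) = 0)
    (hcon₂' : E₂ * (1 - D₂p * D₂) = 0) {F₁₁p : Matrix n m₂ R}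
    (hG : (1 - C₂ * (1 - C₁p * C₁) * F₁₁p) * (E₂ - C₂ * C₁p * E₁ * D₁p * D₂) = 0) :
    C₂ * (C₁p * E₁ * D₁p + (1 - C₁p * C₁) * C₂p * E₂ * D₂p) * D₂ = E₂ := by
  set L := 1 - C₁p * C₁ with hL
  have hC₁P₂ : C₁ * (C₂p * C₂) = C₁ := by
    rw [Matrix.mul_sub, Matrix.mul_one, sub_eq_zero] at horth₁; exact horth₁.symm
  have hP₂C₁p : C₂p * C₂ * C₁p = C₁p := mul_pinv_eq_of_mul_eq hC₂pC₂ hC₁P₂ hC₁p hC₁pC₁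
  have hLC₁p : L * C₁p = 0 := by rw [hL, Matrix.sub_mul, Matrix.one_mul, hC₁p, sub_self]
  have hLPL : L * (C₂p * C₂) * L = C₂p * C₂ * L := by
    refine one_sub_mul_mul_one_sub_of_mul_eq ?_ ?_ ?_
    · rw [← Matrix.mul_assoc, hC₁p]
    · rw [← Matrix.mul_assoc, hP₂C₁p]
    · rw [Matrix.mul_assoc, hC₁P₂]
  -- `C₂p` is an inner inverse of `F₁₁ = C₂ L`, so `F₁₁ C₂p` fixes the column space of `F₁₁`.
  have hF₁₁ : C₂ * L * C₂p * (C₂ * L) = C₂ * L := by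
    calc C₂ * L * C₂p * (C₂ * L) = C₂ * (L * (C₂p * C₂) * L) := by simp only [Matrix.mul_assoc]
      _ = C₂ * L := by rw [hLPL, ← Matrix.mul_assoc, ← Matrix.mul_assoc, hC₂]
  have hG' := mul_mul_eq_of_one_sub_mul_mul_eq_zero_s17 hF₁₁ hG
  have hF₁₁C₁p : C₂ * L * C₂p * (C₂ * C₁p * E₁ * D₁p * D₂) = 0 := by
    rw [show C₂ * L * C₂p * (C₂ * C₁p * E₁ * D₁p * D₂)
        = C₂ * (L * (C₂p * C₂ * C₁p)) * (E₁ * D₁p * D₂) by simp only [Matrix.mul_assoc],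
      hP₂C₁p, hLC₁p, Matrix.mul_zero, Matrix.zero_mul]
  rw [Matrix.mul_sub, hF₁₁C₁p, sub_zero] at hG'
  rw [Matrix.mul_sub, Matrix.mul_one, sub_eq_zero] at hcon₂'
  calc C₂ * (C₁p * E₁ * D₁p + L * C₂p * E₂ * D₂p) * D₂
      = C₂ * C₁p * E₁ * D₁p * D₂ + C₂ * L * C₂p * (E₂ * (D₂p * D₂)) := by
        simp only [Matrix.mul_add, Matrix.add_mul, Matrix.mul_assoc]
    _ = E₂ := by rw [← hcon₂', hG', add_sub_cancel]

end Pair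

end Matrix

theorem stmt17_general {c₁ c₂ c₃ c₄ n p d₁ d₂ d₃ d₄ : ℕ}
    (C₁ : Matrix (Fin c₁) (Fin n) Hq) (C₂ : Matrix (Fin c₂) (Fin n) Hq)
    (C₃ : Matrix (Fin c₃) (Fin n) Hq) (C₄ : Matrix (Fin c₄) (Fin n) Hq)
    (D₁ : Matrix (Fin p) (Fin d₁) Hq) (D₂ : Matrix (Fin p) (Fin d₂) Hq)
    (D₃ : Matrix (Fin p) (Fin d₃) Hq) (D₄ : Matrix (Fin p) (Fin d₄) Hq)
    (E₁ : Matrix (Fin c₁) (Fin d₁) Hq) (E₂ : Matrix (Fin c₂) (Fin d₂) Hq)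
    (E₃ : Matrix (Fin c₃) (Fin d₃) Hq) (E₄ : Matrix (Fin c₄) (Fin d₄) Hq)
    (C₁p : Matrix (Fin n) (Fin c₁) Hq) (hC₁p : IsMPInv C₁ C₁p)
    (C₂p : Matrix (Fin n) (Fin c₂) Hq) (hC₂p : IsMPInv C₂ C₂p)
    (C₃p : Matrix (Fin n) (Fin c₃) Hq) (hC₃p : IsMPInv C₃ C₃p)
    (C₄p : Matrix (Fin n) (Fin c₄) Hq) (hC₄p : IsMPInv C₄ C₄p)
    (D₁p : Matrix (Fin d₁) (Fin p) Hq) (hD₁p : IsMPInv D₁ D₁p)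
    (D₂p : Matrix (Fin d₂) (Fin p) Hq) (hD₂p : IsMPInv D₂ D₂p)
    (D₃p : Matrix (Fin d₃) (Fin p) Hq) (hD₃p : IsMPInv D₃ D₃p)
    (D₄p : Matrix (Fin d₄) (Fin p) Hq) (hD₄p : IsMPInv D₄ D₄p)
    (F₁₁ : Matrix (Fin c₂) (Fin n) Hq) (hF₁₁ : F₁₁ = C₂ * (1 - C₁p * C₁))
    (F₂₂ : Matrix (Fin c₄) (Fin n) Hq) (hF₂₂ : F₂₂ = C₄ * (1 - C₃p * C₃))
    (F₁₁p : Matrix (Fin n) (Fin c₂) Hq)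
    (F₂₂p : Matrix (Fin n) (Fin c₄) Hq)
    (horth₁ : C₁ * (1 - C₂p * C₂) = 0) (horth₂ : (1 - D₁ * D₁p) * D₂ = 0)
    (horth₃ : C₃ * (1 - C₄p * C₄) = 0) (horth₄ : (1 - D₃ * D₃p) * D₄ = 0)
    (hcon₁ : (1 - C₁ * C₁p) * E₁ = 0) (hcon₁' : E₁ * (1 - D₁p * D₁) = 0)
    (hcon₂' : E₂ * (1 - D₂p * D₂) = 0)
    (hcon₃ : (1 - C₃ * C₃p) * E₃ = 0) (hcon₃' : E₃ * (1 - D₃p * D₃) = 0)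
    (hcon₄' : E₄ * (1 - D₄p * D₄) = 0)
    (hG₁ : (1 - F₁₁ * F₁₁p) * (E₂ - C₂ * C₁p * E₁ * D₁p * D₂) = 0)
    (hG₂ : (1 - F₂₂ * F₂₂p) * (E₄ - C₄ * C₃p * E₃ * D₃p * D₄) = 0)
    (F₁ : Matrix (Fin n) (Fin p) Hq)
    (hF₁ : F₁ = C₁p * E₁ * D₁p + (1 - C₁p * C₁) * C₂p * E₂ * D₂p)
    (F₂ : Matrix (Fin n) (Fin p) Hq)
    (hF₂ : F₂ = C₃p * E₃ * D₃p + (1 - C₃p * C₃) * C₄p * E₄ * D₄p)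
    (F : Matrix (Fin n) (Fin p) Hq) (hF : F = F₂ - F₁)
    (C₁₁ : Matrix (Fin n) (Fin n ⊕ Fin n) Hq)
    (hC₁₁ : C₁₁ = Matrix.fromCols (1 - C₂p * C₂) (1 - C₄p * C₄))
    (D₁₁ : Matrix (Fin p ⊕ Fin p) (Fin p) Hq)
    (hD₁₁ : D₁₁ = Matrix.fromRows (1 - D₁ * D₁p) (1 - D₃ * D₃p))
    (C₂₂ : Matrix (Fin n) (Fin n) Hq) (hC₂₂ : C₂₂ = 1 - C₁p * C₁)
    (D₂₂ : Matrix (Fin p) (Fin p) Hq) (hD₂₂ : D₂₂ = 1 - D₂ * D₂p)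
    (C₃₃ : Matrix (Fin n) (Fin n) Hq) (hC₃₃ : C₃₃ = 1 - C₃p * C₃)
    (D₃₃ : Matrix (Fin p) (Fin p) Hq) (hD₃₃ : D₃₃ = 1 - D₄ * D₄p) :
    (∃ Y : Matrix (Fin n) (Fin p) Hq,
        C₁ * Y * D₁ = E₁ ∧ C₂ * Y * D₂ = E₂ ∧ C₃ * Y * D₃ = E₃ ∧ C₄ * Y * D₄ = E₄) ↔
      (∃ V₁ W₁ V₂ W₂ V₃ W₃ : Matrix (Fin n) (Fin p) Hq,
        C₁₁ * Matrix.fromRows V₁ W₁ + Matrix.fromCols V₂ W₂ * D₁₁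
          + C₂₂ * V₃ * D₂₂ + C₃₃ * W₃ * D₃₃ = F) := by
  subst hF₁₁ hF₂₂ hC₁₁ hD₁₁ hC₂₂ hD₂₂ hC₃₃ hD₃₃ hF
  have hF₁E₁ : C₁ * F₁ * D₁ = E₁ := hF₁ ▸ pair_particular_solution_left hC₁p.1 hcon₁ hcon₁'
  have hF₁E₂ : C₂ * F₁ * D₂ = E₂ := hF₁ ▸ pair_particular_solution_right hC₁p.2.1 hC₁p.2.2.2
    hC₂p.1 hC₂p.2.2.2 horth₁ hcon₂' hG₁
  have hF₂E₃ : C₃ * F₂ * D₃ = E₃ := hF₂ ▸ pair_particular_solution_left hC₃p.1 hcon₃ hcon₃'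
  have hF₂E₄ : C₄ * F₂ * D₄ = E₄ := hF₂ ▸ pair_particular_solution_right hC₃p.2.1 hC₃p.2.2.2
    hC₄p.1 hC₄p.2.2.2 horth₃ hcon₄' hG₂
  have hhom₁ := pair_homogeneous_iff hC₁p.1 hC₂p.1 hD₁p.1 hD₂p.1 horth₁ horth₂
  have hhom₂ := pair_homogeneous_iff hC₃p.1 hC₄p.1 hD₃p.1 hD₄p.1 horth₃ horth₄
  simp only [fromCols_mul_fromRows]
  constructor
  · rintro ⟨Y, h₁, h₂, h₃, h₄⟩
    obtain ⟨V₁, V₂, V₃, hV⟩ := (hhom₁ (Y - F₁)).1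
      ⟨(mul_mul_eq_iff_mul_sub_mul_eq_zero hF₁E₁).1 h₁,
        (mul_mul_eq_iff_mul_sub_mul_eq_zero hF₁E₂).1 h₂⟩
    obtain ⟨W₁, W₂, W₃, hW⟩ := (hhom₂ (F₂ - Y)).1
      ⟨(mul_mul_eq_iff_mul_sub_mul_eq_zero' hF₂E₃).1 h₃,
        (mul_mul_eq_iff_mul_sub_mul_eq_zero' hF₂E₄).1 h₄⟩
    refine ⟨V₁, W₁, V₂, W₂, V₃, W₃, ?_⟩
    rw [← sub_add_sub_cancel' Y, ← hV, ← hW]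
    abel
  · rintro ⟨V₁, W₁, V₂, W₂, V₃, W₃, h⟩
    set K₁ := (1 - C₂p * C₂) * V₁ + V₂ * (1 - D₁ * D₁p) + (1 - C₁p * C₁) * V₃ * (1 - D₂ * D₂p)
      with hK₁
    obtain ⟨h₁, h₂⟩ := (hhom₁ (F₁ + K₁ - F₁)).2 ⟨V₁, V₂, V₃, by rw [add_sub_cancel_left]⟩
    obtain ⟨h₃, h₄⟩ := (hhom₂ (F₂ - (F₁ + K₁))).2
      ⟨W₁, W₂, W₃, by rw [sub_add_eq_sub_sub, ← h, hK₁]; abel⟩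
    exact ⟨F₁ + K₁, (mul_mul_eq_iff_mul_sub_mul_eq_zero hF₁E₁).2 h₁,
      (mul_mul_eq_iff_mul_sub_mul_eq_zero hF₁E₂).2 h₂,
      (mul_mul_eq_iff_mul_sub_mul_eq_zero' hF₂E₃).2 h₃,
      (mul_mul_eq_iff_mul_sub_mul_eq_zero' hF₂E₄).2 h₄⟩

/-- Reduction of the four-equation system `CᵢYDᵢ = Eᵢ` (i = 1,…,4) to the single
block equation `C₁₁(V₁;W₁) + (V₂,W₂)D₁₁ + C₂₂V₃D₂₂ + C₃₃W₃D₃₃ = F`. -/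
theorem stmt17 {c₁ c₂ c₃ c₄ n p d₁ d₂ d₃ d₄ : ℕ}
    (C₁ : Matrix (Fin c₁) (Fin n) Hq) (C₂ : Matrix (Fin c₂) (Fin n) Hq)
    (C₃ : Matrix (Fin c₃) (Fin n) Hq) (C₄ : Matrix (Fin c₄) (Fin n) Hq)
    (D₁ : Matrix (Fin p) (Fin d₁) Hq) (D₂ : Matrix (Fin p) (Fin d₂) Hq)
    (D₃ : Matrix (Fin p) (Fin d₃) Hq) (D₄ : Matrix (Fin p) (Fin d₄) Hq)
    (E₁ : Matrix (Fin c₁) (Fin d₁) Hq) (E₂ : Matrix (Fin c₂) (Fin d₂) Hq)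
    (E₃ : Matrix (Fin c₃) (Fin d₃) Hq) (E₄ : Matrix (Fin c₄) (Fin d₄) Hq)
    (C₁p : Matrix (Fin n) (Fin c₁) Hq) (hC₁p : IsMPInv C₁ C₁p)
    (C₂p : Matrix (Fin n) (Fin c₂) Hq) (hC₂p : IsMPInv C₂ C₂p)
    (C₃p : Matrix (Fin n) (Fin c₃) Hq) (hC₃p : IsMPInv C₃ C₃p)
    (C₄p : Matrix (Fin n) (Fin c₄) Hq) (hC₄p : IsMPInv C₄ C₄p)
    (D₁p : Matrix (Fin d₁) (Fin p) Hq) (hD₁p : IsMPInv D₁ D₁p)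
    (D₂p : Matrix (Fin d₂) (Fin p) Hq) (hD₂p : IsMPInv D₂ D₂p)
    (D₃p : Matrix (Fin d₃) (Fin p) Hq) (hD₃p : IsMPInv D₃ D₃p)
    (D₄p : Matrix (Fin d₄) (Fin p) Hq) (hD₄p : IsMPInv D₄ D₄p)
    (F₁₁ : Matrix (Fin c₂) (Fin n) Hq) (hF₁₁ : F₁₁ = C₂ * (1 - C₁p * C₁))
    (F₂₂ : Matrix (Fin c₄) (Fin n) Hq) (hF₂₂ : F₂₂ = C₄ * (1 - C₃p * C₃))
    (F₁₁p : Matrix (Fin n) (Fin c₂) Hq) (hF₁₁p : IsMPInv F₁₁ F₁₁p)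
    (F₂₂p : Matrix (Fin n) (Fin c₄) Hq) (hF₂₂p : IsMPInv F₂₂ F₂₂p)
    (horth₁ : C₁ * (1 - C₂p * C₂) = 0) (horth₂ : (1 - D₁ * D₁p) * D₂ = 0)
    (horth₃ : C₃ * (1 - C₄p * C₄) = 0) (horth₄ : (1 - D₃ * D₃p) * D₄ = 0)
    (hcon₁ : (1 - C₁ * C₁p) * E₁ = 0) (hcon₁' : E₁ * (1 - D₁p * D₁) = 0)
    (hcon₂ : (1 - C₂ * C₂p) * E₂ = 0) (hcon₂' : E₂ * (1 - D₂p * D₂) = 0)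
    (hcon₃ : (1 - C₃ * C₃p) * E₃ = 0) (hcon₃' : E₃ * (1 - D₃p * D₃) = 0)
    (hcon₄ : (1 - C₄ * C₄p) * E₄ = 0) (hcon₄' : E₄ * (1 - D₄p * D₄) = 0)
    (hG₁ : (1 - F₁₁ * F₁₁p) * (E₂ - C₂ * C₁p * E₁ * D₁p * D₂) = 0)
    (hG₂ : (1 - F₂₂ * F₂₂p) * (E₄ - C₄ * C₃p * E₃ * D₃p * D₄) = 0)
    (F₁ : Matrix (Fin n) (Fin p) Hq)
    (hF₁ : F₁ = C₁p * E₁ * D₁p + (1 - C₁p * C₁) * C₂p * E₂ * D₂p)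
    (F₂ : Matrix (Fin n) (Fin p) Hq)
    (hF₂ : F₂ = C₃p * E₃ * D₃p + (1 - C₃p * C₃) * C₄p * E₄ * D₄p)
    (F : Matrix (Fin n) (Fin p) Hq) (hF : F = F₂ - F₁)
    (C₁₁ : Matrix (Fin n) (Fin n ⊕ Fin n) Hq)
    (hC₁₁ : C₁₁ = Matrix.fromCols (1 - C₂p * C₂) (1 - C₄p * C₄))
    (D₁₁ : Matrix (Fin p ⊕ Fin p) (Fin p) Hq)
    (hD₁₁ : D₁₁ = Matrix.fromRows (1 - D₁ * D₁p) (1 - D₃ * D₃p))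
    (C₂₂ : Matrix (Fin n) (Fin n) Hq) (hC₂₂ : C₂₂ = 1 - C₁p * C₁)
    (D₂₂ : Matrix (Fin p) (Fin p) Hq) (hD₂₂ : D₂₂ = 1 - D₂ * D₂p)
    (C₃₃ : Matrix (Fin n) (Fin n) Hq) (hC₃₃ : C₃₃ = 1 - C₃p * C₃)
    (D₃₃ : Matrix (Fin p) (Fin p) Hq) (hD₃₃ : D₃₃ = 1 - D₄ * D₄p) :
    (∃ Y : Matrix (Fin n) (Fin p) Hq,
        C₁ * Y * D₁ = E₁ ∧ C₂ * Y * D₂ = E₂ ∧ C₃ * Y * D₃ = E₃ ∧ C₄ * Y * D₄ = E₄) ↔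
      (∃ V₁ W₁ V₂ W₂ V₃ W₃ : Matrix (Fin n) (Fin p) Hq,
        C₁₁ * Matrix.fromRows V₁ W₁ + Matrix.fromCols V₂ W₂ * D₁₁
          + C₂₂ * V₃ * D₂₂ + C₃₃ * W₃ * D₃₃ = F) :=
  stmt17_general C₁ C₂ C₃ C₄ D₁ D₂ D₃ D₄ E₁ E₂ E₃ E₄ C₁p hC₁p C₂p hC₂p C₃p hC₃p C₄p hC₄p D₁p hD₁p
    D₂p hD₂p D₃p hD₃p D₄p hD₄p F₁₁ hF₁₁ F₂₂ hF₂₂ F₁₁p F₂₂p horth₁ horth₂ horth₃ horth₄ hcon₁ hcon₁'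
    hcon₂' hcon₃ hcon₃' hcon₄' hG₁ hG₂ F₁ hF₁ F₂ hF₂ F hF C₁₁ hC₁₁ D₁₁ hD₁₁ C₂₂ hC₂₂ D₂₂ hD₂₂ C₃₃
    hC₃₃ D₃₃ hD₃₃
end
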